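/- arXiv:1805.05328 — 5 statements merged into one kernel-verified Lean document; each statement's English description precedes it below -/
import Mathlib

section
/- For every 2-dimensional 0-1 matrix (or family of 2-dimensional 0-1 matrices) P and all positive integers k, m, n, L the following holds: if every collection of pairwise disjoint nonempty sets of cells ('letters') of the m×n grid, in which each letter consists of at least k cells all lying in a single column and the 2-dimensional 0-1 matrix whose ones are exactly the cells covered by the letters avoids P, has at most L letters, then ex(n,m,P) ≤ k(L+n). -/
/-! ### Multidimensional 0-1 matrices, represented as the finsets of their one-entries -/

/-- `M` contains `P`: there are coordinatewise strictly increasing maps sending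
every one of `P` to a one of `M`. -/
def MContains {d : ℕ} {mdims pdims : Fin d → ℕ}
    (M : Finset ((i : Fin d) → Fin (mdims i)))
    (P : Finset ((i : Fin d) → Fin (pdims i))) : Prop :=
  ∃ f : (i : Fin d) → (Fin (pdims i) → Fin (mdims i)),
    (∀ i, StrictMono (f i)) ∧ ∀ x ∈ P, (fun i => f i (x i)) ∈ M

/-- `ex(n, P, d)`: the maximum number of ones in a `P`-avoiding `d`-dimensional
0-1 matrix all of whose dimension lengths equal `n`. -/
noncomputable def exSq (n : ℕ) {d : ℕ} {pdims : Fin d → ℕ}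
    (P : Finset ((i : Fin d) → Fin (pdims i))) : ℕ :=
  sSup {k | ∃ M : Finset (Fin d → Fin n), ¬ MContains M P ∧ M.card = k}

/-- The groups `G 0, …, G (s-1)` form the structure of a `(P,s)`-formation:
each group has `P.card` ones, the tails (coordinates other than the first) of each group
form one common set which is a copy of `P` under strictly increasing maps, and the first
coordinates of the groups are strictly ordered between groups. -/
def FormationGroups {d : ℕ} {pdims : Fin d → ℕ}
    (P : Finset ((i : Fin d) → Fin (pdims i))) (s : ℕ) {mdims : Fin (d+1) → ℕ}
    (G : Fin s → Finset ((i : Fin (d+1)) → Fin (mdims i))) : Prop :=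
  (∀ a, (G a).card = P.card) ∧
  (∃ g : (i : Fin d) → (Fin (pdims i) → Fin (mdims i.succ)),
      (∀ i, StrictMono (g i)) ∧
      ∀ a, (G a).image Fin.tail = P.image (fun x => fun i => g i (x i))) ∧
  (∀ a b : Fin s, a < b → ∀ p ∈ G a, ∀ q ∈ G b, p 0 < q 0)

/-- `M` is a `(P,s)`-formation, i.e. a member of `F_{P,s}`. -/
def IsFormation {d : ℕ} {pdims : Fin d → ℕ}
    (P : Finset ((i : Fin d) → Fin (pdims i))) (s : ℕ) {mdims : Fin (d+1) → ℕ}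
    (M : Finset ((i : Fin (d+1)) → Fin (mdims i))) : Prop :=
  ∃ G : Fin s → Finset ((i : Fin (d+1)) → Fin (mdims i)),
    FormationGroups P s G ∧ M = Finset.univ.biUnion G

/-- `M` contains a `(P,s)`-formation, i.e. `M` contains some member of the family `F_{P,s}`. -/
def ContainsFormation {d : ℕ} {pdims : Fin d → ℕ}
    (P : Finset ((i : Fin d) → Fin (pdims i))) (s : ℕ) {mdims : Fin (d+1) → ℕ}
    (M : Finset ((i : Fin (d+1)) → Fin (mdims i))) : Prop :=
  ∃ G : Fin s → Finset ((i : Fin (d+1)) → Fin (mdims i)),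
    FormationGroups P s G ∧ ∀ a, G a ⊆ M

/-- `ex(n, F_{P,s}, d+1)`: the maximum number of ones in a `(d+1)`-dimensional 0-1 matrix
with all dimension lengths `n` avoiding every `(P,s)`-formation. -/
noncomputable def exFormation (n : ℕ) {d : ℕ} {pdims : Fin d → ℕ}
    (P : Finset ((i : Fin d) → Fin (pdims i))) (s : ℕ) : ℕ :=
  sSup {k | ∃ M : Finset (Fin (d+1) → Fin n), ¬ ContainsFormation P s M ∧ M.card = k}

/-- Dimension lengths of a box whose first dimension has length `m` and whose
other `d` dimensions have length `n`. -/
def BoxDims (d m n : ℕ) : Fin (d+1) → ℕ := Fin.cons m (fun _ => n)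

/-- `L` is a valid family of letters: pairwise disjoint nonempty sets of cells, each with
at least `k` cells all lying in a single 1-row. -/
def IsLetterFamily {d : ℕ} {mdims : Fin (d+1) → ℕ} (k : ℕ)
    (L : Finset (Finset ((i : Fin (d+1)) → Fin (mdims i)))) : Prop :=
  (∀ S ∈ L, S.Nonempty) ∧
  (∀ S ∈ L, ∀ T ∈ L, S ≠ T → Disjoint S T) ∧
  (∀ S ∈ L, k ≤ S.card ∧ ∃ t : (i : Fin d) → Fin (mdims i.succ), ∀ p ∈ S, Fin.tail p = t)

/-- `lx_k(n, m, F_{P,s}, d+1)`. -/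
noncomputable def lxFormation (n m : ℕ) {d : ℕ} {pdims : Fin d → ℕ}
    (P : Finset ((i : Fin d) → Fin (pdims i))) (s k : ℕ) : ℕ :=
  sSup {c | ∃ L : Finset (Finset ((i : Fin (d+1)) → Fin (BoxDims d m n i))),
    IsLetterFamily k L ∧ ¬ ContainsFormation P s (L.biUnion id) ∧ L.card = c}

/-! ### general families of multidimensional matrices -/

/-- `M` avoids every member of the family `F`. -/
def AvoidsFam {d : ℕ} {mdims : Fin d → ℕ} (M : Finset ((i : Fin d) → Fin (mdims i)))
    (F : (pdims : Fin d → ℕ) → Set (Finset ((i : Fin d) → Fin (pdims i)))) : Prop :=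
  ∀ pdims : Fin d → ℕ, ∀ P ∈ F pdims, ¬ MContains M P

/-- `ex(n, m, F, d)` with `d = e+1`. -/
noncomputable def exBox (n m e : ℕ)
    (F : (pdims : Fin (e+1) → ℕ) → Set (Finset ((i : Fin (e+1)) → Fin (pdims i)))) : ℕ :=
  sSup {k | ∃ M : Finset ((i : Fin (e+1)) → Fin (BoxDims e m n i)),
    AvoidsFam M F ∧ M.card = k}

/-- `lx_k(n, m, F, d)` with `d = e+1`. -/
noncomputable def lxBox (n m e k : ℕ)
    (F : (pdims : Fin (e+1) → ℕ) → Set (Finset ((i : Fin (e+1)) → Fin (pdims i)))) : ℕ :=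
  sSup {c | ∃ L : Finset (Finset ((i : Fin (e+1)) → Fin (BoxDims e m n i))),
    IsLetterFamily k L ∧ AvoidsFam (L.biUnion id) F ∧ L.card = c}

/-! ### 2-dimensional matrices (cells are (row, column) pairs) -/

def Contains2 {m n a b : ℕ} (M : Finset (Fin m × Fin n)) (P : Finset (Fin a × Fin b)) : Prop :=
  ∃ f : Fin a → Fin m, ∃ g : Fin b → Fin n,
    StrictMono f ∧ StrictMono g ∧ ∀ p ∈ P, (f p.1, g p.2) ∈ M

def Avoids2Fam {m n : ℕ} (M : Finset (Fin m × Fin n))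
    (F : (a : ℕ) → (b : ℕ) → Set (Finset (Fin a × Fin b))) : Prop :=
  ∀ a b : ℕ, ∀ P ∈ F a b, ¬ Contains2 M P

/-- `ex(n, m, F)` for a family `F` of 2-dimensional matrices: `m` rows, `n` columns. -/
noncomputable def ex2 (n m : ℕ) (F : (a : ℕ) → (b : ℕ) → Set (Finset (Fin a × Fin b))) : ℕ :=
  sSup {k | ∃ M : Finset (Fin m × Fin n), Avoids2Fam M F ∧ M.card = k}

/-- letters in a 2-dimensional grid: pairwise disjoint nonempty sets of cells, each with
at least `k` cells all lying in a single column. -/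
def IsLetterCol {m n : ℕ} (k : ℕ) (L : Finset (Finset (Fin m × Fin n))) : Prop :=
  (∀ S ∈ L, S.Nonempty) ∧
  (∀ S ∈ L, ∀ T ∈ L, S ≠ T → Disjoint S T) ∧
  (∀ S ∈ L, k ≤ S.card ∧ ∃ j : Fin n, ∀ p ∈ S, p.2 = j)

/-- `A_t`: the 2×t 0-1 matrix with ones exactly where the coordinate sum is even. -/
def Aform (t : ℕ) : Finset (Fin 2 × Fin t) :=
  Finset.univ.filter (fun p => Even ((p.1 : ℕ) + (p.2 : ℕ)))

/-! ### Ackermann hierarchy and related functions -/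

/-- `ackH j n` is `a_j(n)`: `a₁(n) = 2n` and `a_j(n)` is the `n`-fold iterate
of `a_{j-1}` applied to `1`. -/
def ackH : ℕ → ℕ → ℕ
  | 0, n => n
  | 1, n => 2 * n
  | j+2, n => (ackH (j+1))^[n] 1

/-- `α_j(n) = min {k ≥ 1 : a_j(k) ≥ n}`. -/
noncomputable def alphIdx (j n : ℕ) : ℕ := sInf {k | 1 ≤ k ∧ n ≤ ackH j k}

/-- inverse diagonal Ackermann function `α(n) = min {k ≥ 1 : A(k,k) ≥ n}`. -/
noncomputable def alphA (n : ℕ) : ℕ := sInf {k | 1 ≤ k ∧ n ≤ ack k k}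

/-- `R_s(j)`. -/
def Rform : ℕ → ℕ → ℤ
  | 0, _ => 0
  | 1, _ => 2
  | 2, _ => 3
  | _+3, 0 => 0
  | _+3, 1 => 0
  | t+3, 2 => 2 ^ (t+2) + 1
  | t+3, i+3 =>
      Rform (t+3) (i+2) * Rform (t+1) (i+3) + 2 * Rform (t+2) (i+3)
        - 3 * Rform (t+1) (i+3) - Rform (t+3) (i+2) + 2
termination_by s j => (s, j)

/-- `D_s(j)`. -/
def Dform : ℕ → ℕ → ℤ
  | 0, _ => 0
  | 1, _ => 0
  | 2, _ => 2
  | _+3, 0 => 0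
  | _+3, 1 => 0
  | t+3, 2 => 2 ^ (t+2) + 2 ^ (t+1) - 1
  | t+3, i+3 =>
      2 * Dform (t+2) (i+3) + (Dform (t+1) (i+3) + 1) * (Rform (t+3) (i+2) - 3)
        + Dform (t+3) (i+2) - Rform (t+3) (i+2) + 1
termination_by s j => (s, j)

/-- The ones of the 2-dimensional matrix `M` contain a doubled `(r,s)`-formation. -/
def ContainsDoubled (r s : ℕ) {m n : ℕ} (M : Finset (Fin m × Fin n)) : Prop :=
  ∃ S ⊆ M, ∃ b : Fin (s+1) → ℕ, Monotone b ∧ b 0 = 0 ∧ b (Fin.last s) = m ∧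
    ∃ C : Finset (Fin n), C.card = r ∧ (∀ p ∈ S, p.2 ∈ C) ∧
      S.card = r * (2 * s - 2) ∧
      ∀ c ∈ C, ∀ t : Fin s,
        (S.filter (fun p => p.2 = c ∧ b t.castSucc ≤ (p.1 : ℕ) ∧ (p.1 : ℕ) < b t.succ)).card
          = if (t : ℕ) = 0 ∨ (t : ℕ) = s - 1 then 1 else 2


/-! Cut each column of an `F`-avoiding matrix `M` into as many disjoint `k`-sets of ones as
possible. These are letters whose union lies in `M`, hence avoids `F`, so there are at most `L`
of them; and each column loses fewer than `k` ones, so `|M| ≤ k L + k n`. -/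

theorem exists_pairwiseDisjoint_subsets_card_eq_div {α : Type*} [DecidableEq α] (k : ℕ)
    (S : Finset α) :
    ∃ B : Finset (Finset α), (∀ T ∈ B, T ⊆ S ∧ T.card = k) ∧
      (B : Set (Finset α)).PairwiseDisjoint id ∧ B.card = S.card / k := by
  induction hS : S.card using Nat.strong_induction_on generalizing S with
  | _ c ih =>
    subst hS
    by_cases hkS : 0 < k ∧ k ≤ S.card
    · obtain ⟨hk, hkS⟩ := hkS
      obtain ⟨T, hTS, hTk⟩ := Finset.exists_subset_card_eq hkS
      have hcard : (S \ T).card = S.card - k := by rw [Finset.card_sdiff_of_subset hTS, hTk]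
      obtain ⟨B, hB, hBdisj, hBcard⟩ := ih _ (by omega) (S \ T) hcard
      have hTB : T ∉ B := fun hT => by
        obtain ⟨x, hx⟩ := Finset.card_pos.mp (hTk ▸ hk)
        exact (Finset.mem_sdiff.mp ((hB T hT).1 hx)).2 hx
      refine ⟨insert T B, ?_, ?_, ?_⟩
      · simp only [Finset.mem_insert, forall_eq_or_imp]
        exact ⟨⟨hTS, hTk⟩, fun T' hT' =>
          ⟨(hB T' hT').1.trans Finset.sdiff_subset, (hB T' hT').2⟩⟩
      · rw [Finset.coe_insert]
        refine hBdisj.insert fun T' hT' _ => ?_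
        exact Finset.disjoint_of_subset_right (hB T' hT').1 Finset.disjoint_sdiff
      · rw [Finset.card_insert_of_notMem hTB, hBcard, Nat.div_eq_sub_div hk hkS]
    · refine ⟨∅, by simp, by simp, ?_⟩
      rcases Nat.eq_zero_or_pos k with rfl | hk
      · simp
      · rw [Finset.card_empty, eq_comm, Nat.div_eq_zero_iff]; omega

theorem Finset.card_le_mul_sum_card_fiber_div_add {α β : Type*} [DecidableEq β] [Fintype β]
    {k : ℕ} (hk : 0 < k) (s : Finset α) (f : α → β) :
    s.card ≤ k * (∑ b, (s.filter (f · = b)).card / k + Fintype.card β) := by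
  calc s.card = ∑ b, (s.filter (f · = b)).card :=
        Finset.card_eq_sum_card_fiberwise fun x _ => Finset.mem_univ (f x)
    _ ≤ ∑ b, k * ((s.filter (f · = b)).card / k + 1) :=
        Finset.sum_le_sum fun b _ => (Nat.lt_mul_div_succ _ hk).le
    _ = k * (∑ b, (s.filter (f · = b)).card / k + Fintype.card β) := by
        rw [← Finset.mul_sum, Finset.sum_add_distrib, Finset.sum_const, Finset.card_univ,
          smul_eq_mul, mul_one]

theorem Contains2.mono {m n a b : ℕ} {M M' : Finset (Fin m × Fin n)}
    {P : Finset (Fin a × Fin b)} (hP : Contains2 M P) (h : M ⊆ M') : Contains2 M' P :=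
  let ⟨f, g, hf, hg, hfg⟩ := hP
  ⟨f, g, hf, hg, fun p hp => h (hfg p hp)⟩

theorem Avoids2Fam.subset {m n : ℕ} {M M' : Finset (Fin m × Fin n)}
    {F : (a : ℕ) → (b : ℕ) → Set (Finset (Fin a × Fin b))}
    (hM : Avoids2Fam M F) (h : M' ⊆ M) : Avoids2Fam M' F :=
  fun a b P hP hP' => hM a b P hP (hP'.mono h)

theorem exists_isLetterCol_subset_card_eq_sum {m n k : ℕ} (hk : 0 < k)
    (M : Finset (Fin m × Fin n)) :
    ∃ Ls : Finset (Finset (Fin m × Fin n)), IsLetterCol k Ls ∧ Ls.biUnion id ⊆ M ∧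
      Ls.card = ∑ j, (M.filter (·.2 = j)).card / k := by
  choose B hB hBdisj hBcard using
    fun j : Fin n => exists_pairwiseDisjoint_subsets_card_eq_div k (M.filter (·.2 = j))
  have hcol : ∀ j, ∀ T ∈ B j, ∀ p ∈ T, p.2 = j := fun j T hT p hp =>
    (Finset.mem_filter.mp ((hB j T hT).1 hp)).2
  have hne : ∀ j, ∀ T ∈ B j, T.Nonempty := fun j T hT =>
    Finset.card_pos.mp ((hB j T hT).2 ▸ hk)
  have hcols : ((Finset.univ : Finset (Fin n)) : Set (Fin n)).PairwiseDisjoint B := by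
    intro j _ j' _ hjj'
    refine Finset.disjoint_left.mpr fun T hT hT' => ?_
    obtain ⟨p, hp⟩ := hne j T hT
    exact hjj' ((hcol j T hT p hp).symm.trans (hcol j' T hT' p hp))
  refine ⟨Finset.univ.biUnion B, ⟨?_, ?_, ?_⟩, ?_, ?_⟩
  · simp only [Finset.mem_biUnion, Finset.mem_univ, true_and, forall_exists_index]
    exact fun S j hS => hne j S hS
  · simp only [Finset.mem_biUnion, Finset.mem_univ, true_and]
    rintro S ⟨j, hS⟩ T ⟨j', hT⟩ hST
    by_cases hjj' : j = j'
    · subst hjj'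
      exact hBdisj j hS hT hST
    · exact Finset.disjoint_left.mpr fun p hpS hpT =>
        hjj' ((hcol j S hS p hpS).symm.trans (hcol j' T hT p hpT))
  · simp only [Finset.mem_biUnion, Finset.mem_univ, true_and, forall_exists_index]
    exact fun S j hS => ⟨(hB j S hS).2.ge, j, hcol j S hS⟩
  · simp only [Finset.biUnion_subset, Finset.mem_biUnion, Finset.mem_univ, true_and,
      forall_exists_index, id]
    exact fun S j hS => (hB j S hS).1.trans (Finset.filter_subset _ _)
  · rw [Finset.card_biUnion hcols]
    exact Finset.sum_congr rfl fun j _ => hBcard j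

theorem stmt0_general (F : (a : ℕ) → (b : ℕ) → Set (Finset (Fin a × Fin b)))
    (k m n L : ℕ) (hk : 0 < k)
    (h : ∀ Ls : Finset (Finset (Fin m × Fin n)),
      IsLetterCol k Ls → Avoids2Fam (Ls.biUnion id) F → Ls.card ≤ L) :
    ex2 n m F ≤ k * (L + n) := by
  refine csSup_le' ?_
  rintro _ ⟨M, hM, rfl⟩
  obtain ⟨Ls, hLs, hLsM, hcard⟩ := exists_isLetterCol_subset_card_eq_sum hk M
  calc M.card ≤ k * (∑ j, (M.filter (·.2 = j)).card / k + Fintype.card (Fin n)) :=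
        M.card_le_mul_sum_card_fiber_div_add hk Prod.snd
    _ ≤ k * (L + n) := by
        rw [← hcard, Fintype.card_fin]
        gcongr
        exact h Ls hLs (hM.subset hLsM)

/-- if every valid family of letters (each letter has at least `k` cells, all
in a single column) whose underlying 0-1 matrix avoids the family `F` has at most `L`
letters, then `ex(n, m, F) ≤ k (L + n)`. -/
theorem stmt0 (F : (a : ℕ) → (b : ℕ) → Set (Finset (Fin a × Fin b)))
    (k m n L : ℕ) (hk : 0 < k) (hm : 0 < m) (hn : 0 < n) (hL : 0 < L)
    (h : ∀ Ls : Finset (Finset (Fin m × Fin n)),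
      IsLetterCol k Ls → Avoids2Fam (Ls.biUnion id) F → Ls.card ≤ L) :
    ex2 n m F ≤ k * (L + n) :=
  stmt0_general F k m n L hk h
end

section
/- For every family F of d-dimensional 0-1 matrices and all positive integers k, m, n: ex(n,m,F,d) ≤ k·(lx_k(n,m,F,d) + n^{d−1}). -/
/-!
Split every 1-row of an `F`-avoiding matrix `M` into as many disjoint blocks of `k` ones as
possible. The blocks are letters whose union lies in `M`, so there are at most `lx_k` of them,
and each of the at most `n^{d-1}` nonempty 1-rows leaves fewer than `k` ones uncovered.
-/

namespace Finset

variable {α β : Type*} [DecidableEq α] [DecidableEq β]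

theorem exists_pairwiseDisjoint_card_eq_subsets_of_fibers {k : ℕ} (hk : 0 < k) (f : α → β)
    (R : Finset α) :
    ∃ C : Finset (Finset α), (∀ S ∈ C, #S = k ∧ S ⊆ R ∧ ∃ b, ∀ x ∈ S, f x = b) ∧
      (C : Set (Finset α)).PairwiseDisjoint id ∧ #R ≤ k * #C + (k - 1) * #(R.image f) := by
  induction R using Finset.strongInduction with
  | _ R ih =>
    by_cases hsmall : ∀ b ∈ R.image f, #{x ∈ R | f x = b} ≤ k - 1
    · exact ⟨∅, by simp, by simp, by simpa using card_le_mul_card_image R (k - 1) hsmall⟩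
    push Not at hsmall
    obtain ⟨b, -, hbig⟩ := hsmall
    obtain ⟨S, hSfib, hScard⟩ :=
      exists_subset_card_eq (s := {x ∈ R | f x = b}) (n := k) (by omega)
    have hSR : S ⊆ R := hSfib.trans (filter_subset _ _)
    have hSne : S.Nonempty := card_pos.mp (hScard ▸ hk)
    obtain ⟨C, hC, hCdisj, hCcard⟩ := ih (R \ S) (sdiff_ssubset hSR hSne)
    have hSC : ∀ T ∈ C, Disjoint S T := fun T hT =>
      disjoint_of_subset_right (hC T hT).2.1 disjoint_sdiff
    have hSnotC : S ∉ C := fun hS => hSne.ne_empty (disjoint_self.mp (hSC S hS))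
    refine ⟨insert S C, ?_, ?_, ?_⟩
    · simp only [mem_insert, forall_eq_or_imp]
      refine ⟨⟨hScard, hSR, b, fun x hx => (mem_filter.mp (hSfib hx)).2⟩, fun T hT => ?_⟩
      exact ⟨(hC T hT).1, (hC T hT).2.1.trans sdiff_subset, (hC T hT).2.2⟩
    · rw [coe_insert]
      exact hCdisj.insert fun T hT _ => hSC T hT
    · have hRS : #R = k + #(R \ S) := by
        rw [card_sdiff_of_subset hSR, ← hScard]; have := card_le_card hSR; omega
      have himage : #((R \ S).image f) ≤ #(R.image f) :=
        card_le_card (image_subset_image sdiff_subset)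
      rw [card_insert_of_notMem hSnotC, hRS, mul_add_one]
      have := Nat.mul_le_mul_left (k - 1) himage
      omega

end Finset

theorem exists_letterFamily_subset {d : ℕ} {mdims : Fin (d + 1) → ℕ} {k : ℕ} (hk : 0 < k)
    (M : Finset ((i : Fin (d + 1)) → Fin (mdims i))) :
    ∃ L : Finset (Finset ((i : Fin (d + 1)) → Fin (mdims i))), IsLetterFamily k L ∧
      L.biUnion id ⊆ M ∧ M.card ≤ k * L.card + (k - 1) * (M.image Fin.tail).card := by
  obtain ⟨L, hL, hLdisj, hcard⟩ :=
    Finset.exists_pairwiseDisjoint_card_eq_subsets_of_fibers hk Fin.tail M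
  refine ⟨L, ⟨fun S hS => ?_, fun S hS T hT hST => hLdisj hS hT hST, fun S hS => ?_⟩, ?_,
    hcard⟩
  · exact Finset.card_pos.mp ((hL S hS).1 ▸ hk)
  · exact ⟨(hL S hS).1.ge, (hL S hS).2.2⟩
  · exact Finset.biUnion_subset.mpr fun S hS => (hL S hS).2.1

theorem AvoidsFam.mono {d : ℕ} {mdims : Fin d → ℕ}
    {M M' : Finset ((i : Fin d) → Fin (mdims i))}
    {F : (pdims : Fin d → ℕ) → Set (Finset ((i : Fin d) → Fin (pdims i)))}
    (hM : AvoidsFam M F) (h : M' ⊆ M) : AvoidsFam M' F :=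
  fun pdims P hP ⟨f, hf, hmem⟩ => hM pdims P hP ⟨f, hf, fun x hx => h (hmem x hx)⟩

theorem card_le_lxBox {n m e k : ℕ}
    {F : (pdims : Fin (e+1) → ℕ) → Set (Finset ((i : Fin (e+1)) → Fin (pdims i)))}
    {L : Finset (Finset ((i : Fin (e+1)) → Fin (BoxDims e m n i)))}
    (hL : IsLetterFamily k L) (hLF : AvoidsFam (L.biUnion id) F) : L.card ≤ lxBox n m e k F :=
  le_csSup ⟨_, fun _ ⟨L', _, _, hc⟩ => hc ▸ Finset.card_le_univ L'⟩ ⟨L, hL, hLF, rfl⟩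

theorem card_image_tail_le {n m e : ℕ} (M : Finset ((i : Fin (e+1)) → Fin (BoxDims e m n i))) :
    (M.image Fin.tail).card ≤ n ^ e :=
  (Finset.card_le_univ _).trans_eq (by rw [Fintype.card_pi]; simp [BoxDims])

theorem stmt3_general (e : ℕ)
    (F : (pdims : Fin (e+1) → ℕ) → Set (Finset ((i : Fin (e+1)) → Fin (pdims i))))
    (k m n : ℕ) (hk : 0 < k) :
    exBox n m e F ≤ k * (lxBox n m e k F + n ^ e) := by
  refine csSup_le' ?_
  rintro _ ⟨M, hM, rfl⟩
  obtain ⟨L, hL, hLM, hcard⟩ := exists_letterFamily_subset hk M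
  have hLx : L.card ≤ lxBox n m e k F := card_le_lxBox hL (hM.mono hLM)
  have htails := card_image_tail_le M
  calc M.card ≤ k * L.card + (k - 1) * (M.image Fin.tail).card := hcard
    _ ≤ k * lxBox n m e k F + k * n ^ e := by gcongr; omega
    _ = k * (lxBox n m e k F + n ^ e) := by ring

/-- `ex(n, m, F, d) ≤ k (lx_k(n, m, F, d) + n^{d-1})`, where `d = e + 1`. -/
theorem stmt3 (e : ℕ)
    (F : (pdims : Fin (e+1) → ℕ) → Set (Finset ((i : Fin (e+1)) → Fin (pdims i))))
    (k m n : ℕ) (hk : 0 < k) (hm : 0 < m) (hn : 0 < n) :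
    exBox n m e F ≤ k * (lxBox n m e k F + n ^ e) :=
  stmt3_general e F k m n hk
end

section
/- Let P be a d-dimensional 0-1 matrix with at least one one. For every positive integer n: ex(n,F_{P,3},d+1) ≤ 3·(ex(n,P,d)·n + n^d), where ex(n,F_{P,3},d+1) is the maximum number of ones in a (d+1)-dimensional 0-1 matrix with all dimension lengths equal to n that contains no (P,3)-formation. -/
/-! Ones of a `(P,3)`-free matrix that are neither first nor last in their 1-row have, layer by
layer (fixed first coordinate), `P`-free sets of tails: a copy of `P` in one layer, together with
earlier and later ones in the same 1-rows, would be a `(P,3)`-formation. So at most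
`n · ex(n,P,d)` ones are interior to their 1-row, and the first and last ones of the 1-rows
number at most `n^d` each. -/

theorem Fin.eq_of_zero_eq_of_tail_eq {d : ℕ} {α : Fin (d+1) → Type*} {p q : (i : Fin (d+1)) → α i}
    (h0 : p 0 = q 0) (ht : Fin.tail p = Fin.tail q) : p = q := by
  rw [← Fin.cons_self_tail p, ← Fin.cons_self_tail q, h0, ht]

theorem containsFormation_of_rows {d s : ℕ} {pdims : Fin d → ℕ} {mdims : Fin (d+1) → ℕ}
    {P : Finset ((i : Fin d) → Fin (pdims i))} {M : Finset ((i : Fin (d+1)) → Fin (mdims i))}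
    (f : (i : Fin d) → Fin (pdims i) → Fin (mdims i.succ)) (hf : ∀ i, StrictMono (f i))
    (c : Fin s → ((i : Fin d) → Fin (pdims i)) → ((i : Fin (d+1)) → Fin (mdims i)))
    (hcM : ∀ a, ∀ x ∈ P, c a x ∈ M)
    (hc_tail : ∀ a, ∀ x ∈ P, Fin.tail (c a x) = fun i => f i (x i))
    (hc_lt : ∀ a b, a < b → ∀ x ∈ P, ∀ y ∈ P, c a x 0 < c b y 0) :
    ContainsFormation P s M := by
  classical
  refine ⟨fun a => P.image (c a), ⟨fun a => ?_, ⟨f, hf, fun a => ?_⟩, ?_⟩, fun a => ?_⟩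
  · refine Finset.card_image_of_injOn fun x hx y hy hxy => funext fun i => (hf i).injective ?_
    have := congrArg Fin.tail hxy
    rw [hc_tail a x hx, hc_tail a y hy] at this
    exact congrFun this i
  · rw [Finset.image_image]
    exact Finset.image_congr fun x hx => hc_tail a x hx
  · rintro a b hab _ hp _ hq
    obtain ⟨x, hx, rfl⟩ := Finset.mem_image.mp hp
    obtain ⟨y, hy, rfl⟩ := Finset.mem_image.mp hq
    exact hc_lt a b hab x hx y hy
  · rintro _ hp
    obtain ⟨x, hx, rfl⟩ := Finset.mem_image.mp hp
    exact hcM a x hx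

section Rows

variable {d n : ℕ}

def rowFirst (M : Finset (Fin (d+1) → Fin n)) : Finset (Fin (d+1) → Fin n) :=
  M.filter fun p => ∀ q ∈ M, Fin.tail q = Fin.tail p → p 0 ≤ q 0

def rowLast (M : Finset (Fin (d+1) → Fin n)) : Finset (Fin (d+1) → Fin n) :=
  M.filter fun p => ∀ q ∈ M, Fin.tail q = Fin.tail p → q 0 ≤ p 0

def rowInterior (M : Finset (Fin (d+1) → Fin n)) : Finset (Fin (d+1) → Fin n) :=
  M.filter fun p => (∃ q ∈ M, Fin.tail q = Fin.tail p ∧ q 0 < p 0) ∧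
    (∃ q ∈ M, Fin.tail q = Fin.tail p ∧ p 0 < q 0)

theorem card_le_rowFirst_add_rowLast_add_rowInterior (M : Finset (Fin (d+1) → Fin n)) :
    M.card ≤ (rowFirst M).card + (rowLast M).card + (rowInterior M).card := by
  have hcover : M ⊆ rowFirst M ∪ rowLast M ∪ rowInterior M := by
    intro p hp
    simp only [rowFirst, rowLast, rowInterior, Finset.mem_union, Finset.mem_filter]
    by_cases hearlier : ∃ q ∈ M, Fin.tail q = Fin.tail p ∧ q 0 < p 0
    · by_cases hlater : ∃ q ∈ M, Fin.tail q = Fin.tail p ∧ p 0 < q 0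
      · exact Or.inr ⟨hp, hearlier, hlater⟩
      · push Not at hlater
        exact Or.inl (Or.inr ⟨hp, hlater⟩)
    · push Not at hearlier
      exact Or.inl (Or.inl ⟨hp, hearlier⟩)
  calc M.card ≤ (rowFirst M ∪ rowLast M ∪ rowInterior M).card := Finset.card_le_card hcover
    _ ≤ _ := (Finset.card_union_le _ _).trans (Nat.add_le_add_right (Finset.card_union_le _ _) _)

theorem card_le_pow_of_injOn_tail {N : Finset (Fin (d+1) → Fin n)}
    (h : Set.InjOn Fin.tail (N : Set (Fin (d+1) → Fin n))) : N.card ≤ n ^ d := by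
  calc N.card = (N.image Fin.tail).card := (Finset.card_image_of_injOn h).symm
    _ ≤ Fintype.card (Fin d → Fin n) := Finset.card_le_univ _
    _ = n ^ d := by simp

theorem card_rowFirst_le (M : Finset (Fin (d+1) → Fin n)) : (rowFirst M).card ≤ n ^ d := by
  refine card_le_pow_of_injOn_tail fun p hp q hq htail => ?_
  simp only [rowFirst, Finset.mem_coe, Finset.mem_filter] at hp hq
  exact Fin.eq_of_zero_eq_of_tail_eq
    (le_antisymm (hp.2 q hq.1 htail.symm) (hq.2 p hp.1 htail)) htail

theorem card_rowLast_le (M : Finset (Fin (d+1) → Fin n)) : (rowLast M).card ≤ n ^ d := by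
  refine card_le_pow_of_injOn_tail fun p hp q hq htail => ?_
  simp only [rowLast, Finset.mem_coe, Finset.mem_filter] at hp hq
  exact Fin.eq_of_zero_eq_of_tail_eq
    (le_antisymm (hq.2 p hp.1 htail) (hp.2 q hq.1 htail.symm)) htail

theorem card_le_exSq {pdims : Fin d → ℕ} {P : Finset ((i : Fin d) → Fin (pdims i))}
    {W : Finset (Fin d → Fin n)} (hW : ¬ MContains W P) : W.card ≤ exSq n P := by
  refine le_csSup ⟨n ^ d, ?_⟩ ⟨W, hW, rfl⟩
  rintro _ ⟨V, -, rfl⟩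
  simpa using Finset.card_le_univ V

theorem not_mContains_tail_layer_rowInterior {pdims : Fin d → ℕ}
    {P : Finset ((i : Fin d) → Fin (pdims i))} {M : Finset (Fin (d+1) → Fin n)}
    (hM : ¬ ContainsFormation P 3 M) (t : Fin n) :
    ¬ MContains (((rowInterior M).filter (· 0 = t)).image Fin.tail) P := by
  rintro ⟨f, hf, hfP⟩
  have hrow : ∀ x ∈ P, Fin.cons t (fun i => f i (x i)) ∈ rowInterior M := by
    intro x hx
    obtain ⟨p, hp, hpx⟩ := Finset.mem_image.mp (hfP x hx)
    obtain ⟨hp, rfl⟩ := Finset.mem_filter.mp hp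
    rwa [← hpx, Fin.cons_self_tail]
  have hmid : ∀ x ∈ P, Fin.cons t (fun i => f i (x i)) ∈ M :=
    fun x hx => (Finset.mem_filter.mp (hrow x hx)).1
  have hearlier : ∀ x ∈ P, ∃ q ∈ M, Fin.tail q = (fun i => f i (x i)) ∧ q 0 < t :=
    fun x hx => (Finset.mem_filter.mp (hrow x hx)).2.1
  have hlater : ∀ x ∈ P, ∃ q ∈ M, Fin.tail q = (fun i => f i (x i)) ∧ t < q 0 :=
    fun x hx => (Finset.mem_filter.mp (hrow x hx)).2.2
  have : Nonempty (Fin n) := ⟨t⟩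
  choose! earlier hearlierM hearlier_tail hearlier_lt using hearlier
  choose! later hlaterM hlater_tail hlater_lt using hlater
  refine hM (containsFormation_of_rows f hf
    ![earlier, fun x => Fin.cons t (fun i => f i (x i)), later] ?_ ?_ ?_)
  · intro a x hx
    fin_cases a
    exacts [hearlierM x hx, hmid x hx, hlaterM x hx]
  · intro a x hx
    fin_cases a
    exacts [hearlier_tail x hx, Fin.tail_cons _ _, hlater_tail x hx]
  · intro a b hab x hx y hy
    fin_cases a <;> fin_cases b <;> try exact absurd hab (by decide)
    exacts [hearlier_lt x hx, (hearlier_lt x hx).trans (hlater_lt y hy), hlater_lt y hy]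

theorem card_rowInterior_le {pdims : Fin d → ℕ}
    {P : Finset ((i : Fin d) → Fin (pdims i))} {M : Finset (Fin (d+1) → Fin n)}
    (hM : ¬ ContainsFormation P 3 M) : (rowInterior M).card ≤ n * exSq n P := by
  have hlayer : ∀ t : Fin n, ((rowInterior M).filter (· 0 = t)).card ≤ exSq n P := by
    intro t
    have hinj : Set.InjOn Fin.tail (((rowInterior M).filter (· 0 = t)) :
        Set (Fin (d+1) → Fin n)) := by
      intro p hp q hq htail
      simp only [Finset.mem_coe, Finset.mem_filter] at hp hq
      exact Fin.eq_of_zero_eq_of_tail_eq (hp.2.trans hq.2.symm) htail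
    rw [← Finset.card_image_of_injOn hinj]
    exact card_le_exSq (not_mContains_tail_layer_rowInterior hM t)
  calc (rowInterior M).card = ∑ t : Fin n, ((rowInterior M).filter (· 0 = t)).card :=
        Finset.card_eq_sum_card_fiberwise fun p _ => Finset.mem_univ (p 0)
    _ ≤ ∑ _t : Fin n, exSq n P := Finset.sum_le_sum fun t _ => hlayer t
    _ = n * exSq n P := by simp

end Rows

theorem stmt5_general {d : ℕ} {pdims : Fin d → ℕ}
    (P : Finset ((i : Fin d) → Fin (pdims i)))
    (n : ℕ) :
    exFormation n P 3 ≤ 3 * (exSq n P * n + n ^ d) := by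
  refine csSup_le' ?_
  rintro _ ⟨M, hM, rfl⟩
  calc M.card ≤ (rowFirst M).card + (rowLast M).card + (rowInterior M).card :=
        card_le_rowFirst_add_rowLast_add_rowInterior M
    _ ≤ n ^ d + n ^ d + n * exSq n P :=
        add_le_add (add_le_add (card_rowFirst_le M) (card_rowLast_le M)) (card_rowInterior_le hM)
    _ ≤ 3 * (exSq n P * n + n ^ d) := by rw [Nat.mul_comm n]; omega

/-- `ex(n, F_{P,3}, d+1) ≤ 3 (ex(n, P, d) · n + n^d)`. -/
theorem stmt5 {d : ℕ} (hd : 0 < d) {pdims : Fin d → ℕ}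
    (P : Finset ((i : Fin d) → Fin (pdims i))) (hP : P.Nonempty)
    (n : ℕ) (hn : 0 < n) :
    exFormation n P 3 ≤ 3 * (exSq n P * n + n ^ d) :=
  stmt5_general P n
end

section
/- Let P be a d-dimensional 0-1 matrix with at least one one. For every integer s > 1 and all positive integers k, m, n: lx_{2k−1}(n,2m,F_{P,s},d+1) ≤ 2·lx_{2k−1}(n,m,F_{P,s},d+1) + 2·lx_k(n,2m,F_{P,s},d+1). -/
/-! Split the letters of a formation-free family in the `(2m, n, …, n)` box into those in the
lower half of the first coordinate, those in the upper half, and those crossing the middle.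
Shifting the first coordinate turns each of the first two classes into a formation-free family
of `(2k-1)`-letters in the `(m, n, …, n)` box. A crossing letter with at least `2k-1` cells has
at least `k` of them on one side of the middle, and cutting it down to that side gives a
`k`-letter; cutting letters down cannot create a formation. -/

abbrev BoxCell (d m n : ℕ) : Type := (i : Fin (d+1)) → Fin (BoxDims d m n i)

def mapFirst {d m' m n : ℕ} (e : Fin m' → Fin m) (p : BoxCell d m' n) : BoxCell d m n :=
  Fin.cons (e (p 0)) (Fin.tail p)

section MapFirst

variable {d m' m n : ℕ} {e : Fin m' → Fin m}

@[simp]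
theorem tail_mapFirst (p : BoxCell d m' n) : Fin.tail (mapFirst e p) = Fin.tail p := rfl

theorem mapFirst_id : (mapFirst id : BoxCell d m n → BoxCell d m n) = id :=
  funext Fin.cons_self_tail

theorem mapFirst_injective (he : Function.Injective e) :
    Function.Injective (mapFirst (d := d) (n := n) e) := fun p q h => by
  have htail := congrArg Fin.tail h
  simp only [tail_mapFirst] at htail
  rw [← Fin.cons_self_tail p, ← Fin.cons_self_tail q, he (congrFun h 0), htail]

theorem mem_range_mapFirst {p : BoxCell d m n} (h : p 0 ∈ Set.range e) :
    p ∈ Set.range (mapFirst e) := by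
  obtain ⟨a, ha⟩ := h
  exact ⟨Fin.cons a (Fin.tail p), funext fun i => Fin.cases ha (fun _ => rfl) i⟩

end MapFirst

section Formation

variable {d : ℕ} {pdims : Fin d → ℕ} {P : Finset ((i : Fin d) → Fin (pdims i))} {s : ℕ}

theorem ContainsFormation.mono {mdims : Fin (d+1) → ℕ}
    {M N : Finset ((i : Fin (d+1)) → Fin (mdims i))} (h : ContainsFormation P s M)
    (hMN : M ⊆ N) : ContainsFormation P s N := by
  obtain ⟨G, hG, hsub⟩ := h
  exact ⟨G, hG, fun a => (hsub a).trans hMN⟩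

theorem ContainsFormation.image_mapFirst {m' m n : ℕ} {e : Fin m' → Fin m} (he : StrictMono e)
    {M : Finset (BoxCell d m' n)} (h : ContainsFormation P s M) :
    ContainsFormation P s (M.image (mapFirst e)) := by
  obtain ⟨G, ⟨hcard, ⟨g, hg, htail⟩, hord⟩, hsub⟩ := h
  refine ⟨fun a => (G a).image (mapFirst e), ⟨fun a => ?_, ⟨g, hg, fun a => ?_⟩, ?_⟩,
    fun a => Finset.image_subset_image (hsub a)⟩
  · rw [Finset.card_image_of_injective _ (mapFirst_injective he.injective), hcard]
  · rw [Finset.image_image]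
    exact htail a
  · simp only [Finset.mem_image]
    rintro a b hab _ ⟨p, hp, rfl⟩ _ ⟨q, hq, rfl⟩
    exact he (hord a b hab p hp q hq)

theorem card_le_lxFormation {m n k : ℕ} {L : Finset (Finset (BoxCell d m n))}
    (hL : IsLetterFamily k L) (hav : ¬ ContainsFormation P s (L.biUnion id)) :
    L.card ≤ lxFormation n m P s k :=
  le_csSup ⟨_, fun _ ⟨L', _, _, hc⟩ => hc ▸ Finset.card_le_univ L'⟩ ⟨L, hL, hav, rfl⟩

section Restrict

variable {m' m n k k' : ℕ} {e : Fin m' → Fin m} {L L' : Finset (Finset (BoxCell d m n))}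

theorem card_le_lxFormation_of_restrict (he : StrictMono e) (hL : IsLetterFamily k' L)
    (hav : ¬ ContainsFormation P s (L.biUnion id)) (hL' : L' ⊆ L)
    (F : Finset (BoxCell d m n) → Finset (BoxCell d m' n))
    (hF : ∀ S ∈ L', (F S).image (mapFirst e) ⊆ S) (hne : ∀ S ∈ L', (F S).Nonempty)
    (hk : ∀ S ∈ L', k ≤ (F S).card) :
    L'.card ≤ lxFormation n m' P s k := by
  obtain ⟨-, hLdisj, hLrow⟩ := hL
  have hdisj : ∀ S ∈ L', ∀ T ∈ L', S ≠ T → Disjoint (F S) (F T) := fun S hS T hT hST =>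
    (Finset.disjoint_image (mapFirst_injective he.injective)).mp
      ((hLdisj S (hL' hS) T (hL' hT) hST).mono (hF S hS) (hF T hT))
  have hinj : Set.InjOn F L' := fun S hS T hT hFST => by
    by_contra hST
    have := hdisj S hS T hT hST
    rw [hFST, disjoint_self, Finset.bot_eq_empty] at this
    exact (hne T hT).ne_empty this
  rw [← Finset.card_image_of_injOn hinj]
  refine card_le_lxFormation ⟨?_, ?_, ?_⟩ fun h => hav ((h.image_mapFirst he).mono ?_)
  · simpa only [Finset.forall_mem_image] using hne
  · simp only [Finset.forall_mem_image]
    exact fun S hS T hT hST => hdisj S hS T hT fun h => hST (h ▸ rfl)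
  · simp only [Finset.forall_mem_image]
    refine fun S hS => ⟨hk S hS, ?_⟩
    obtain ⟨t, ht⟩ := (hLrow S (hL' hS)).2
    exact ⟨t, fun p hp => ht _ (hF S hS (Finset.mem_image_of_mem _ hp))⟩
  · rw [Finset.biUnion_image, Finset.image_biUnion]
    exact (Finset.biUnion_mono fun S hS => hF S hS).trans
      (Finset.biUnion_subset_biUnion_of_subset_left _ hL')

theorem card_le_lxFormation_of_forall_mem_range (he : StrictMono e) (hL : IsLetterFamily k L)
    (hav : ¬ ContainsFormation P s (L.biUnion id)) (hL' : L' ⊆ L)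
    (hrange : ∀ S ∈ L', ∀ p ∈ S, p 0 ∈ Set.range e) :
    L'.card ≤ lxFormation n m' P s k := by
  have hinj := mapFirst_injective (d := d) (n := n) he.injective
  have himage : ∀ S ∈ L', (S.preimage (mapFirst e) hinj.injOn).image (mapFirst e) = S := by
    intro S hS
    rw [Finset.image_preimage, Finset.filter_true_of_mem]
    exact fun p hp => mem_range_mapFirst (hrange S hS p hp)
  refine card_le_lxFormation_of_restrict he hL hav hL'
    (fun S => S.preimage (mapFirst e) hinj.injOn) (fun S hS => (himage S hS).le)
    (fun S hS => ?_) (fun S hS => ?_)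
  · exact Finset.image_nonempty.mp ((himage S hS).symm ▸ hL.1 S (hL' hS))
  · rw [← Finset.card_image_of_injective _ hinj, himage S hS]
    exact (hL.2.2 S (hL' hS)).1

theorem card_filter_le_lxFormation (q : BoxCell d m n → Prop) [DecidablePred q]
    (hL : IsLetterFamily k' L) (hav : ¬ ContainsFormation P s (L.biUnion id)) :
    (L.filter fun S => (S.filter q).Nonempty ∧ k ≤ (S.filter q).card).card
      ≤ lxFormation n m P s k :=
  card_le_lxFormation_of_restrict strictMono_id hL hav (Finset.filter_subset _ _)
    (fun S => S.filter q)
    (fun S _ => by rw [mapFirst_id, Finset.image_id]; exact Finset.filter_subset _ _)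
    (fun S hS => (Finset.mem_filter.1 hS).2.1) fun S hS => (Finset.mem_filter.1 hS).2.2

end Restrict

section Halves

variable {m n k : ℕ} {L : Finset (Finset (BoxCell d (2 * m) n))}

theorem card_filter_forall_lt_le_lxFormation (hL : IsLetterFamily k L)
    (hav : ¬ ContainsFormation P s (L.biUnion id)) :
    (L.filter fun S => ∀ p ∈ S, (p 0 : ℕ) < m).card ≤ lxFormation n m P s k :=
  card_le_lxFormation_of_forall_mem_range (e := Fin.castLE (by omega)) (Fin.strictMono_castLE _)
    hL hav (Finset.filter_subset _ _)
    fun S hS p hp => ⟨⟨p 0, (Finset.mem_filter.1 hS).2 p hp⟩, rfl⟩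

theorem card_filter_forall_not_lt_le_lxFormation (hL : IsLetterFamily k L)
    (hav : ¬ ContainsFormation P s (L.biUnion id)) :
    (L.filter fun S => ∀ p ∈ S, ¬ (p 0 : ℕ) < m).card ≤ lxFormation n m P s k :=
  card_le_lxFormation_of_forall_mem_range (e := fun a => ⟨a + m, by omega⟩)
    (fun a b h => Nat.add_lt_add_right h m) hL hav (Finset.filter_subset _ _)
    fun S hS p hp => by
      have hm : m ≤ (p 0 : ℕ) := not_lt.1 ((Finset.mem_filter.1 hS).2 p hp)
      have h2m : (p 0 : ℕ) < 2 * m := (p 0).isLt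
      exact ⟨⟨p 0 - m, by omega⟩, Fin.ext (Nat.sub_add_cancel hm)⟩

end Halves

end Formation

theorem Finset.forall_or_forall_not_or_le_card_filter {α : Type*} {S : Finset α} {k : ℕ}
    (q : α → Prop) [DecidablePred q] (hS : 2 * k - 1 ≤ S.card) :
    (∀ a ∈ S, q a) ∨ (∀ a ∈ S, ¬ q a) ∨
      ((S.filter q).Nonempty ∧ k ≤ (S.filter q).card) ∨
      ((S.filter fun a => ¬ q a).Nonempty ∧ k ≤ (S.filter fun a => ¬ q a).card) := by
  by_cases hall : ∀ a ∈ S, q a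
  · exact .inl hall
  by_cases hnone : ∀ a ∈ S, ¬ q a
  · exact .inr (.inl hnone)
  push Not at hall hnone
  obtain ⟨a, haS, ha⟩ := hall
  obtain ⟨b, hbS, hb⟩ := hnone
  have hcard := Finset.card_filter_add_card_filter_not (s := S) q
  refine .inr (.inr ?_)
  by_cases hk : k ≤ (S.filter q).card
  · exact .inl ⟨⟨b, Finset.mem_filter.2 ⟨hbS, hb⟩⟩, hk⟩
  · exact .inr ⟨⟨a, Finset.mem_filter.2 ⟨haS, ha⟩⟩, by omega⟩

theorem stmt6_general {d : ℕ} {pdims : Fin d → ℕ}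
    (P : Finset ((i : Fin d) → Fin (pdims i)))
    (s k m n : ℕ) :
    lxFormation n (2 * m) P s (2 * k - 1)
      ≤ 2 * lxFormation n m P s (2 * k - 1) + 2 * lxFormation n (2 * m) P s k := by
  refine csSup_le' ?_
  rintro _ ⟨L, hL, hav, rfl⟩
  have hcover : L ⊆ (L.filter fun S => ∀ p ∈ S, (p 0 : ℕ) < m)
      ∪ (L.filter fun S => ∀ p ∈ S, ¬ (p 0 : ℕ) < m)
      ∪ ((L.filter fun S => (S.filter fun p => (p 0 : ℕ) < m).Nonempty
            ∧ k ≤ (S.filter fun p => (p 0 : ℕ) < m).card)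
        ∪ (L.filter fun S => (S.filter fun p => ¬ (p 0 : ℕ) < m).Nonempty
            ∧ k ≤ (S.filter fun p => ¬ (p 0 : ℕ) < m).card)) := fun S hS => by
    simpa only [Finset.mem_union, Finset.mem_filter, hS, true_and, or_assoc] using
      Finset.forall_or_forall_not_or_le_card_filter _ (hL.2.2 S hS).1
  have hlow := card_filter_forall_lt_le_lxFormation hL hav
  have hhigh := card_filter_forall_not_lt_le_lxFormation hL hav
  have hcrossLow := card_filter_le_lxFormation (k := k) (fun p => (p 0 : ℕ) < m) hL hav
  have hcrossHigh := card_filter_le_lxFormation (k := k) (fun p => ¬ (p 0 : ℕ) < m) hL hav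
  calc L.card ≤ _ := (Finset.card_le_card hcover).trans <| (Finset.card_union_le _ _).trans <|
        add_le_add (Finset.card_union_le _ _) (Finset.card_union_le _ _)
    _ ≤ _ := add_le_add (add_le_add hlow hhigh) (add_le_add hcrossLow hcrossHigh)
    _ = _ := by ring

/-- `lx_{2k-1}(n, 2m, F_{P,s}, d+1)
    ≤ 2 lx_{2k-1}(n, m, F_{P,s}, d+1) + 2 lx_k(n, 2m, F_{P,s}, d+1)`. -/
theorem stmt6 {d : ℕ} (hd : 0 < d) {pdims : Fin d → ℕ}
    (P : Finset ((i : Fin d) → Fin (pdims i))) (hP : P.Nonempty)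
    (s k m n : ℕ) (hs : 1 < s) (hk : 0 < k) (hm : 0 < m) (hn : 0 < n) :
    lxFormation n (2 * m) P s (2 * k - 1)
      ≤ 2 * lxFormation n m P s (2 * k - 1) + 2 * lxFormation n (2 * m) P s k :=
  stmt6_general P s k m n
end

section
/- Let P be a d-dimensional 0-1 matrix with at least two ones. There exists a constant C such that for every positive integer n: ex(n,F_{P,4},d+1) ≤ C · n · α(n) · ex(n,P,d). -/
/-!
A one of a `(d+1)`-dimensional matrix is encoded as the cell `(x, t)` of its first coordinate `x`
and its 1-row `t`. A `(P, 4)`-formation is then a copy `R` of `P` among the 1-rows with four cells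
in each row of `R`, all `a`-th cells preceding all `b`-th cells for `a < b`; and a set of 1-rows
containing no copy of `P` has at most `E = ex(n, P, d)` elements.

Cut the positions into blocks of `μ` consecutive positions. Cells whose row meets a single block
are bounded recursively inside their block. Inside a block, the cells lying in the first (last)
block of their row contain no 3-formation, since a later (earlier) cell of each row would extend
it to a 4-formation, and the cells in a middle block of their row contain no 2-formation. Such
cells cost `E` per position plus at most two cells per row: at a fixed position, the rows having
a cell before and a cell after it contain no copy of `P`. For the middle cells the "one per row"
term counts pairs (row, block), i.e. the middle cells with every block contracted to a point;
these form again a configuration without 4-formation, on fewer positions, bounded one level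
down. This Davenport–Schinzel type recursion handles `ackWidth j t` positions at the cost
`6 j t E` per position plus `4 j + 2` per row, and `n ≤ ackWidth (2 α(n) + 1) 3`. Finally there
are `n ^ d ≤ n E` 1-rows, as every hyperplane avoids `P` (two ones of `P` differ in some
coordinate).
-/

open Finset

section Formations

variable {τ : Type*}

def HasFormation (S : Finset (ℕ × τ)) (R : Finset τ) (k : ℕ) : Prop :=
  ∃ x : Fin k → τ → ℕ, (∀ a, ∀ t ∈ R, (x a t, t) ∈ S) ∧
    ∀ a b, a < b → ∀ t ∈ R, ∀ t' ∈ R, x a t < x b t'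

def FormationFree (F : Finset τ → Prop) (S : Finset (ℕ × τ)) : Prop :=
  ∀ R, F R → ¬ HasFormation S R 4

def FreeCardBound (F : Finset τ → Prop) (E : ℕ) : Prop :=
  ∀ W : Finset τ, (∀ R ⊆ W, ¬ F R) → W.card ≤ E

variable {S T : Finset (ℕ × τ)} {R : Finset τ} {k : ℕ} {F : Finset τ → Prop}

theorem HasFormation.mono (h : HasFormation T R k) (hTS : T ⊆ S) : HasFormation S R k := by
  obtain ⟨x, hx, hlt⟩ := h
  exact ⟨x, fun a t ht => hTS (hx a t ht), hlt⟩

theorem FormationFree.mono (h : FormationFree F S) (hTS : T ⊆ S) : FormationFree F T :=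
  fun R hR hT => h R hR (hT.mono hTS)

theorem hasFormation_one {x : ℕ} (h : ∀ t ∈ R, (x, t) ∈ T) : HasFormation T R 1 :=
  ⟨fun _ _ => x, fun _ => h, fun a b hab =>
    absurd hab (by rw [Subsingleton.elim a b]; exact lt_irrefl b)⟩

theorem HasFormation.cons (h : HasFormation T R k) (hTS : T ⊆ S)
    (hy : ∀ t ∈ R, ∃ y, (y, t) ∈ S ∧ ∀ c ∈ T, y < c.1) :
    HasFormation S R (k + 1) := by
  obtain ⟨x, hx, hlt⟩ := h
  choose! y hyS hyT using hy
  refine ⟨Fin.cons y x, fun a t ht => ?_, fun a b hab t ht t' ht' => ?_⟩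
  · cases a using Fin.cases with
    | zero => exact hyS t ht
    | succ a => exact hTS (hx a t ht)
  · cases b using Fin.cases with
    | zero => exact absurd hab (Fin.not_lt_zero a)
    | succ b =>
      cases a using Fin.cases with
      | zero => exact hyT t ht _ (hx b t' ht')
      | succ a => exact hlt a b (Fin.succ_lt_succ_iff.mp hab) t ht t' ht'

theorem HasFormation.snoc (h : HasFormation T R k) (hTS : T ⊆ S)
    (hz : ∀ t ∈ R, ∃ z, (z, t) ∈ S ∧ ∀ c ∈ T, c.1 < z) :
    HasFormation S R (k + 1) := by
  obtain ⟨x, hx, hlt⟩ := h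
  choose! z hzS hzT using hz
  refine ⟨Fin.snoc x z, fun a t ht => ?_, fun a b hab t ht t' ht' => ?_⟩
  · cases a using Fin.lastCases with
    | last => simpa using hzS t ht
    | cast a => simpa using hTS (hx a t ht)
  · cases a using Fin.lastCases with
    | last => exact absurd hab (not_lt.mpr (Fin.le_last b))
    | cast a =>
      cases b using Fin.lastCases with
      | last => simpa using hzT t' ht' _ (hx a t ht)
      | cast b => simpa using hlt a b (Fin.castSucc_lt_castSucc_iff.mp hab) t ht t' ht'

theorem mk_fst_mem {c : ℕ × τ} {t : τ} (hc : c ∈ S) (h : c.2 = t) : (c.1, t) ∈ S := by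
  subst h
  exact hc

/-- `q` sends a position to the block containing it; with `q = id` the blocks are single
positions. -/
def EarlierInRow (q : ℕ → ℕ) (S : Finset (ℕ × τ)) (c : ℕ × τ) : Prop :=
  ∃ c' ∈ S, c'.2 = c.2 ∧ q c'.1 < q c.1

def LaterInRow (q : ℕ → ℕ) (S : Finset (ℕ × τ)) (c : ℕ × τ) : Prop :=
  ∃ c' ∈ S, c'.2 = c.2 ∧ q c.1 < q c'.1

variable {q : ℕ → ℕ} {c c' : ℕ × τ}

theorem eq_of_not_earlierInRow (hc : c ∈ S) (hc' : c' ∈ S) (hrow : c.2 = c'.2)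
    (h : ¬ EarlierInRow q S c) (h' : ¬ EarlierInRow q S c') : q c.1 = q c'.1 := by
  rcases lt_trichotomy (q c.1) (q c'.1) with hlt | heq | hlt
  · exact absurd ⟨c, hc, hrow, hlt⟩ h'
  · exact heq
  · exact absurd ⟨c', hc', hrow.symm, hlt⟩ h

theorem eq_of_not_laterInRow (hc : c ∈ S) (hc' : c' ∈ S) (hrow : c.2 = c'.2)
    (h : ¬ LaterInRow q S c) (h' : ¬ LaterInRow q S c') : q c.1 = q c'.1 := by
  rcases lt_trichotomy (q c.1) (q c'.1) with hlt | heq | hlt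
  · exact absurd ⟨c', hc', hrow.symm, hlt⟩ h
  · exact heq
  · exact absurd ⟨c, hc, hrow, hlt⟩ h'

theorem eq_of_not_earlierInRow_of_not_laterInRow (hc' : c' ∈ S) (hrow : c.2 = c'.2)
    (h : ¬ EarlierInRow q S c) (h' : ¬ LaterInRow q S c) : q c.1 = q c'.1 := by
  rcases lt_trichotomy (q c.1) (q c'.1) with hlt | heq | hlt
  · exact absurd ⟨c', hc', hrow.symm, hlt⟩ h'
  · exact heq
  · exact absurd ⟨c', hc', hrow.symm, hlt⟩ h

end Formations

section Counting

variable {τ : Type*} {S T : Finset (ℕ × τ)} {F : Finset τ → Prop} {E : ℕ}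

abbrev positions (S : Finset (ℕ × τ)) : Finset ℕ := S.image Prod.fst

theorem card_positions_le_of_subset (h : T ⊆ S) : (positions T).card ≤ (positions S).card :=
  card_le_card (image_subset_image h)

variable [DecidableEq τ]

abbrev rows (S : Finset (ℕ × τ)) : Finset τ := S.image Prod.snd

instance (q : ℕ → ℕ) (S : Finset (ℕ × τ)) : DecidablePred (EarlierInRow q S) :=
  fun _ => inferInstanceAs (Decidable (∃ _ ∈ S, _))

instance (q : ℕ → ℕ) (S : Finset (ℕ × τ)) : DecidablePred (LaterInRow q S) :=
  fun _ => inferInstanceAs (Decidable (∃ _ ∈ S, _))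

theorem card_le_card_positions_mul_card_rows (S : Finset (ℕ × τ)) :
    S.card ≤ (positions S).card * (rows S).card :=
  (card_le_card subset_product).trans (card_product _ _).le

theorem card_le_of_slices (hE : FreeCardBound F E)
    (h : ∀ x, ∀ R ⊆ rows (T.filter (·.1 = x)), ¬ F R) :
    T.card ≤ E * (positions T).card := by
  have hslice : ∀ x, (T.filter (·.1 = x)).card ≤ E := by
    intro x
    have hinj : Set.InjOn Prod.snd (T.filter (·.1 = x) : Set (ℕ × τ)) := by
      intro c hc c' hc' hrow
      simp only [coe_filter] at hc hc'
      exact Prod.ext (hc.2.trans hc'.2.symm) hrow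
    rw [← card_image_of_injOn hinj]
    exact hE _ (h x)
  rw [card_eq_sum_card_fiberwise fun c hc => mem_image_of_mem Prod.fst hc]
  calc ∑ x ∈ positions T, (T.filter (·.1 = x)).card
      ≤ ∑ _x ∈ positions T, E := sum_le_sum fun x _ => hslice x
    _ = E * (positions T).card := by rw [sum_const, smul_eq_mul, mul_comm]

theorem card_filter_le_card_rows (p : ℕ × τ → Prop) [DecidablePred p]
    (h : ∀ c ∈ T, ∀ c' ∈ T, p c → p c' → c.2 = c'.2 → c.1 = c'.1) :
    (T.filter p).card ≤ (rows T).card := by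
  refine card_le_card_of_injOn Prod.snd (fun c hc => mem_image_of_mem _ (mem_filter.mp hc).1) ?_
  intro c hc c' hc' hrow
  simp only [coe_filter, Set.mem_ofPred_eq] at hc hc'
  exact Prod.ext (h c hc.1 c' hc'.1 hc.2 hc'.2 hrow) hrow

theorem mk_mem_of_mem_rows_filter {x : ℕ} {t : τ} (h : t ∈ rows (T.filter (·.1 = x))) :
    (x, t) ∈ T := by
  obtain ⟨c, hc, rfl⟩ := mem_image.mp h
  rw [mem_filter] at hc
  rw [← hc.2]
  exact hc.1

theorem hasFormation_one_of_subset_rows {x : ℕ} {R : Finset τ}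
    (hR : R ⊆ rows (T.filter (·.1 = x))) : HasFormation (T.filter (·.1 = x)) R 1 :=
  hasFormation_one fun _ ht => mem_filter.mpr ⟨mk_mem_of_mem_rows_filter (hR ht), rfl⟩

theorem card_le_of_forall_not_hasFormation_two (hE : FreeCardBound F E)
    (hT : ∀ R, F R → ¬ HasFormation T R 2) :
    T.card ≤ E * (positions T).card + (rows T).card := by
  have hm : (T.filter (EarlierInRow id T)).card
      ≤ E * (positions (T.filter (EarlierInRow id T))).card := by
    refine card_le_of_slices hE fun x R hR hFR => hT R hFR ?_
    refine (hasFormation_one_of_subset_rows hR).cons ((filter_subset _ _).trans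
      (filter_subset _ T)) fun t ht => ?_
    obtain ⟨c', hc'T, hrow, hlt⟩ := (mem_filter.mp (mk_mem_of_mem_rows_filter (hR ht))).2
    exact ⟨c'.1, mk_fst_mem hc'T hrow, fun c hc => (mem_filter.mp hc).2 ▸ hlt⟩
  have hfirst : (T.filter fun c => ¬ EarlierInRow id T c).card ≤ (rows T).card :=
    card_filter_le_card_rows _ fun c hc c' hc' h h' hrow => eq_of_not_earlierInRow hc hc' hrow h h'
  have hpos := card_positions_le_of_subset (filter_subset (EarlierInRow id T) T)
  have := Nat.mul_le_mul_left E hpos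
  have := card_filter_add_card_filter_not (s := T) (EarlierInRow id T)
  omega

theorem card_filter_not_earlierInRow_or_not_laterInRow_le :
    (T.filter fun c => ¬ EarlierInRow id T c ∨ ¬ LaterInRow id T c).card
      ≤ 2 * (rows T).card := by
  rw [filter_or, two_mul]
  refine (card_union_le _ _).trans (add_le_add ?_ ?_)
  · exact card_filter_le_card_rows _ fun c hc c' hc' h h' hrow =>
      eq_of_not_earlierInRow hc hc' hrow h h'
  · exact card_filter_le_card_rows _ fun c hc c' hc' h h' hrow =>
      eq_of_not_laterInRow hc hc' hrow h h'

theorem card_le_of_forall_not_hasFormation_three (hE : FreeCardBound F E)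
    (hT : ∀ R, F R → ¬ HasFormation T R 3) :
    T.card ≤ E * (positions T).card + 2 * (rows T).card := by
  have hm : (T.filter fun c => EarlierInRow id T c ∧ LaterInRow id T c).card
      ≤ E * (positions (T.filter fun c => EarlierInRow id T c ∧ LaterInRow id T c)).card := by
    refine card_le_of_slices hE fun x R hR hFR => hT R hFR ?_
    have hx : ∀ t ∈ R, EarlierInRow id T (x, t) ∧ LaterInRow id T (x, t) := fun t ht =>
      (mem_filter.mp (mk_mem_of_mem_rows_filter (hR ht))).2
    have h2 : HasFormation (T.filter (·.1 ≤ x)) R 2 := by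
      refine (hasFormation_one_of_subset_rows hR).cons (fun c hc => ?_) fun t ht => ?_
      · obtain ⟨hc, hcx⟩ := mem_filter.mp hc
        exact mem_filter.mpr ⟨(mem_filter.mp hc).1, hcx.le⟩
      · obtain ⟨c', hc'T, hrow, hlt⟩ := (hx t ht).1
        exact ⟨c'.1, mem_filter.mpr ⟨mk_fst_mem hc'T hrow, hlt.le⟩,
          fun c hc => (mem_filter.mp hc).2 ▸ hlt⟩
    refine h2.snoc (filter_subset _ T) fun t ht => ?_
    obtain ⟨c', hc'T, hrow, hlt⟩ := (hx t ht).2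
    exact ⟨c'.1, mk_fst_mem hc'T hrow, fun c hc => (mem_filter.mp hc).2.trans_lt hlt⟩
  have hend := card_filter_not_earlierInRow_or_not_laterInRow_le (T := T)
  have := Nat.mul_le_mul_left E (card_positions_le_of_subset
    (filter_subset (fun c => EarlierInRow id T c ∧ LaterInRow id T c) T))
  have := card_filter_add_card_filter_not (s := T)
    fun c => EarlierInRow id T c ∧ LaterInRow id T c
  simp only [not_and_or] at this
  omega

end Counting

section Blocks

variable {τ : Type*} {S T : Finset (ℕ × τ)} {R : Finset τ} {F : Finset τ → Prop}
  {q : ℕ → ℕ} {i : ℕ}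

theorem not_hasFormation_three_of_laterInRow (hS : FormationFree F S) (hq : Monotone q)
    (hTS : T ⊆ S) (hT : ∀ c ∈ T, q c.1 = i ∧ LaterInRow q S c) (hR : F R) :
    ¬ HasFormation T R 3 := by
  intro h
  refine hS R hR (h.snoc hTS fun t ht => ?_)
  obtain ⟨x, hx, -⟩ := h
  obtain ⟨hxi, c', hc'S, hrow, hlt⟩ := hT _ (hx 0 t ht)
  refine ⟨c'.1, mk_fst_mem hc'S hrow, fun c hc => hq.reflect_lt ?_⟩
  rw [(hT c hc).1, ← hxi]
  exact hlt

theorem not_hasFormation_three_of_earlierInRow (hS : FormationFree F S) (hq : Monotone q)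
    (hTS : T ⊆ S) (hT : ∀ c ∈ T, q c.1 = i ∧ EarlierInRow q S c) (hR : F R) :
    ¬ HasFormation T R 3 := by
  intro h
  refine hS R hR (h.cons hTS fun t ht => ?_)
  obtain ⟨x, hx, -⟩ := h
  obtain ⟨hxi, c', hc'S, hrow, hlt⟩ := hT _ (hx 0 t ht)
  refine ⟨c'.1, mk_fst_mem hc'S hrow, fun c hc => hq.reflect_lt ?_⟩
  rw [(hT c hc).1, ← hxi]
  exact hlt

theorem not_hasFormation_two_of_earlierInRow_of_laterInRow (hS : FormationFree F S)
    (hq : Monotone q) (hTS : T ⊆ S)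
    (hT : ∀ c ∈ T, q c.1 = i ∧ EarlierInRow q S c ∧ LaterInRow q S c) (hR : F R) :
    ¬ HasFormation T R 2 := by
  intro h
  obtain ⟨x, hx, -⟩ := id h
  have h3 : HasFormation (S.filter (q ·.1 ≤ i)) R 3 := by
    refine h.cons (fun c hc => mem_filter.mpr ⟨hTS hc, (hT c hc).1.le⟩) fun t ht => ?_
    obtain ⟨hxi, ⟨c', hc'S, hrow, hlt⟩, -⟩ := hT _ (hx 0 t ht)
    refine ⟨c'.1, mem_filter.mpr ⟨mk_fst_mem hc'S hrow, hxi ▸ hlt.le⟩,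
      fun c hc => hq.reflect_lt ?_⟩
    rw [(hT c hc).1, ← hxi]
    exact hlt
  refine hS R hR (h3.snoc (filter_subset _ S) fun t ht => ?_)
  obtain ⟨hxi, -, c', hc'S, hrow, hlt⟩ := hT _ (hx 0 t ht)
  refine ⟨c'.1, mk_fst_mem hc'S hrow, fun c hc => hq.reflect_lt ?_⟩
  exact (mem_filter.mp hc).2.trans_lt (hxi ▸ hlt)

variable [DecidableEq τ]

def derive (q : ℕ → ℕ) (T : Finset (ℕ × τ)) : Finset (ℕ × τ) :=
  T.image fun c => (q c.1, c.2)

theorem HasFormation.of_derive {k : ℕ} (hq : Monotone q) (h : HasFormation (derive q T) R k) :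
    HasFormation T R k := by
  obtain ⟨x, hx, hlt⟩ := h
  have hpre : ∀ a t, t ∈ R → ∃ y, (y, t) ∈ T ∧ q y = x a t := by
    intro a t ht
    obtain ⟨c, hc, hce⟩ := mem_image.mp (hx a t ht)
    simp only [Prod.mk.injEq] at hce
    exact ⟨c.1, mk_fst_mem hc hce.2, hce.1⟩
  choose! y hyT hyq using hpre
  refine ⟨y, hyT, fun a b hab t ht t' ht' => hq.reflect_lt ?_⟩
  rw [hyq a t ht, hyq b t' ht']
  exact hlt a b hab t ht t' ht'

theorem rows_derive (q : ℕ → ℕ) (T : Finset (ℕ × τ)) : rows (derive q T) = rows T := by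
  rw [derive, rows, rows, image_image]
  rfl

theorem card_derive_le_card_rows (h : ∀ c ∈ T, ∀ c' ∈ T, c.2 = c'.2 → q c.1 = q c'.1) :
    (derive q T).card ≤ (rows T).card := by
  refine card_le_card_of_injOn Prod.snd (fun e he => ?_) fun e he e' he' hrow => ?_
  · obtain ⟨c, hc, rfl⟩ := mem_image.mp he
    exact mem_image.mpr ⟨c, hc, rfl⟩
  · obtain ⟨c, hc, rfl⟩ := mem_image.mp he
    obtain ⟨c', hc', rfl⟩ := mem_image.mp he'
    exact Prod.ext (h c hc c' hc' hrow) hrow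

theorem card_le_of_card_block_le (a b : ℕ)
    (h : ∀ i, (T.filter (q ·.1 = i)).card ≤ a * (positions (T.filter (q ·.1 = i))).card
      + b * (rows (T.filter (q ·.1 = i))).card) :
    T.card ≤ a * (positions T).card + b * (derive q T).card := by
  set I := (positions T).image q
  have hpos : ∑ i ∈ I, (positions (T.filter (q ·.1 = i))).card = (positions T).card := by
    rw [card_eq_sum_card_fiberwise (f := q) fun x hx => mem_image_of_mem q hx]
    exact sum_congr rfl fun i _ => by rw [filter_image]
  have hrows : ∑ i ∈ I, (rows (T.filter (q ·.1 = i))).card ≤ (derive q T).card := by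
    rw [card_eq_sum_card_fiberwise (f := Prod.fst) (t := I) fun e he => by
      obtain ⟨c, hc, rfl⟩ := mem_image.mp he
      exact mem_image_of_mem q (mem_image_of_mem Prod.fst hc)]
    refine sum_le_sum fun i _ => card_le_card_of_injOn (fun t => (i, t)) (fun t ht => ?_)
      fun t _ t' _ h => (Prod.mk.inj h).2
    obtain ⟨c, hc, rfl⟩ := mem_image.mp ht
    obtain ⟨hcT, hci⟩ := mem_filter.mp hc
    exact mem_filter.mpr ⟨hci ▸ mem_image_of_mem _ hcT, rfl⟩
  calc T.card = ∑ i ∈ I, (T.filter (q ·.1 = i)).card :=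
        card_eq_sum_card_fiberwise fun c hc => mem_image_of_mem q (mem_image_of_mem Prod.fst hc)
    _ ≤ ∑ i ∈ I, (a * (positions (T.filter (q ·.1 = i))).card
          + b * (rows (T.filter (q ·.1 = i))).card) := sum_le_sum fun i _ => h i
    _ = a * ∑ i ∈ I, (positions (T.filter (q ·.1 = i))).card
          + b * ∑ i ∈ I, (rows (T.filter (q ·.1 = i))).card := by
        rw [sum_add_distrib, mul_sum, mul_sum]
    _ ≤ a * (positions T).card + b * (derive q T).card := by
        rw [hpos]
        gcongr

end Blocks

section BlockOf

variable {X : Finset ℕ} {μ : ℕ}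

/-- Blocks of `μ` consecutive elements of `X`, counted by rank, so that only the last block can
be short. -/
def blockOf (X : Finset ℕ) (μ x : ℕ) : ℕ := (X.filter (· < x)).card / μ

theorem blockOf_mono : Monotone (blockOf X μ) := fun _ _ hxy =>
  Nat.div_le_div_right (card_le_card (monotone_filter_right X fun _ _ hz => hz.trans_le hxy))

theorem blockOf_mul_lt {x : ℕ} (hx : x ∈ X) : blockOf X μ x * μ < X.card :=
  (Nat.div_mul_le_self _ _).trans_lt (card_lt_card (filter_ssubset.mpr ⟨x, hx, lt_irrefl x⟩))

theorem card_filter_blockOf_eq_le (hμ : 0 < μ) (i : ℕ) :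
    (X.filter (blockOf X μ · = i)).card ≤ μ := by
  set r := fun x => (X.filter (· < x)).card
  have hr : ∀ x ∈ X, ∀ y, x < y → r x < r y := fun x hx y hxy =>
    card_lt_card ((ssubset_iff_of_subset (monotone_filter_right X fun _ _ hz => hz.trans hxy)).mpr
      ⟨x, mem_filter.mpr ⟨hx, hxy⟩, fun h => lt_irrefl x (mem_filter.mp h).2⟩)
  calc (X.filter (blockOf X μ · = i)).card ≤ (Ico (i * μ) (i * μ + μ)).card := by
        refine card_le_card_of_injOn r (fun x hx => ?_) fun x hx y hy hxy => ?_
        · have hi : r x / μ = i := (mem_filter.mp hx).2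
          rw [coe_Ico, Set.mem_Ico, ← hi]
          exact ⟨Nat.div_mul_le_self _ _, Nat.lt_div_mul_add hμ⟩
        · have hx := (mem_filter.mp hx).1
          have hy := (mem_filter.mp hy).1
          rcases lt_trichotomy x y with h | h | h
          · exact absurd hxy (hr x hx y h).ne
          · exact h
          · exact absurd hxy (hr y hy x h).ne'
    _ = μ := by simp

end BlockOf

section Split

variable {τ : Type*} [DecidableEq τ] {S : Finset (ℕ × τ)} {F : Finset τ → Prop} {E : ℕ}
  {q : ℕ → ℕ}

abbrev localCells (q : ℕ → ℕ) (S : Finset (ℕ × τ)) : Finset (ℕ × τ) :=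
  S.filter fun c => ¬ EarlierInRow q S c ∧ ¬ LaterInRow q S c

abbrev firstBlockCells (q : ℕ → ℕ) (S : Finset (ℕ × τ)) : Finset (ℕ × τ) :=
  S.filter fun c => ¬ EarlierInRow q S c ∧ LaterInRow q S c

abbrev lastBlockCells (q : ℕ → ℕ) (S : Finset (ℕ × τ)) : Finset (ℕ × τ) :=
  S.filter fun c => EarlierInRow q S c ∧ ¬ LaterInRow q S c

abbrev middleBlockCells (q : ℕ → ℕ) (S : Finset (ℕ × τ)) : Finset (ℕ × τ) :=
  S.filter fun c => EarlierInRow q S c ∧ LaterInRow q S c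

abbrev nonlocalCells (q : ℕ → ℕ) (S : Finset (ℕ × τ)) : Finset (ℕ × τ) :=
  S.filter fun c => EarlierInRow q S c ∨ LaterInRow q S c

theorem card_eq_card_localCells_add_card_add_card_add_card :
    S.card = (localCells q S).card + (firstBlockCells q S).card + (lastBlockCells q S).card
      + (middleBlockCells q S).card := by
  have h1 := card_filter_add_card_filter_not (s := S) (EarlierInRow q S)
  have h2 := card_filter_add_card_filter_not (s := S.filter (EarlierInRow q S)) (LaterInRow q S)
  have h3 := card_filter_add_card_filter_not (s := S.filter (¬ EarlierInRow q S ·))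
    (LaterInRow q S)
  simp only [filter_filter] at h2 h3
  unfold localCells firstBlockCells lastBlockCells middleBlockCells
  omega

theorem card_rows_localCells_add_card_rows_nonlocalCells_le :
    (rows (localCells q S)).card + (rows (nonlocalCells q S)).card ≤ (rows S).card := by
  rw [← card_union_of_disjoint]
  · exact card_le_card (union_subset (image_subset_image (filter_subset _ _))
      (image_subset_image (filter_subset _ _)))
  refine disjoint_left.mpr fun t ht ht' => ?_
  obtain ⟨c, hc, rfl⟩ := mem_image.mp ht
  obtain ⟨c', hc', hrow⟩ := mem_image.mp ht'
  obtain ⟨hcS, hE, hL⟩ := mem_filter.mp hc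
  obtain ⟨hc'S, hc'⟩ := mem_filter.mp hc'
  have hq' := eq_of_not_earlierInRow_of_not_laterInRow hc'S hrow.symm hE hL
  rcases hc' with ⟨c'', hc''S, hrow', hlt⟩ | ⟨c'', hc''S, hrow', hlt⟩
  · have := eq_of_not_earlierInRow_of_not_laterInRow hc''S (hrow'.trans hrow).symm hE hL
    omega
  · have := eq_of_not_earlierInRow_of_not_laterInRow hc''S (hrow'.trans hrow).symm hE hL
    omega

theorem card_localCells_le {a b μ : ℕ}
    (hμ : ∀ i, (positions (S.filter (q ·.1 = i))).card ≤ μ)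
    (hloc : ∀ T ⊆ S, (positions T).card ≤ μ →
      T.card ≤ a * (positions T).card + b * (rows T).card) :
    (localCells q S).card ≤ a * (positions S).card + b * (rows (localCells q S)).card := by
  have hCS : localCells q S ⊆ S := filter_subset _ _
  refine (card_le_of_card_block_le _ _ fun i => hloc _ ((filter_subset _ _).trans hCS)
    ((card_positions_le_of_subset (filter_subset_filter _ hCS)).trans (hμ i))).trans ?_
  gcongr
  · exact image_subset_image hCS
  · refine card_derive_le_card_rows fun c hc c' hc' hrow => ?_
    exact eq_of_not_earlierInRow_of_not_laterInRow (mem_filter.mp hc').1 hrow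
      (mem_filter.mp hc).2.1 (mem_filter.mp hc).2.2

theorem card_firstBlockCells_le (hE : FreeCardBound F E) (hS : FormationFree F S)
    (hq : Monotone q) :
    (firstBlockCells q S).card
      ≤ E * (positions S).card + 2 * (rows (firstBlockCells q S)).card := by
  have hCS : firstBlockCells q S ⊆ S := filter_subset _ _
  refine (card_le_of_card_block_le _ _ fun i =>
    card_le_of_forall_not_hasFormation_three hE fun R hR =>
      not_hasFormation_three_of_laterInRow hS hq ((filter_subset _ _).trans hCS)
        (fun c hc => ⟨(mem_filter.mp hc).2, (mem_filter.mp (mem_filter.mp hc).1).2.2⟩)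
        hR).trans ?_
  gcongr
  · exact image_subset_image hCS
  · refine card_derive_le_card_rows fun c hc c' hc' hrow => ?_
    exact eq_of_not_earlierInRow (mem_filter.mp hc).1 (mem_filter.mp hc').1 hrow
      (mem_filter.mp hc).2.1 (mem_filter.mp hc').2.1

theorem card_lastBlockCells_le (hE : FreeCardBound F E) (hS : FormationFree F S)
    (hq : Monotone q) :
    (lastBlockCells q S).card
      ≤ E * (positions S).card + 2 * (rows (lastBlockCells q S)).card := by
  have hCS : lastBlockCells q S ⊆ S := filter_subset _ _
  refine (card_le_of_card_block_le _ _ fun i =>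
    card_le_of_forall_not_hasFormation_three hE fun R hR =>
      not_hasFormation_three_of_earlierInRow hS hq ((filter_subset _ _).trans hCS)
        (fun c hc => ⟨(mem_filter.mp hc).2, (mem_filter.mp (mem_filter.mp hc).1).2.1⟩)
        hR).trans ?_
  gcongr
  · exact image_subset_image hCS
  · refine card_derive_le_card_rows fun c hc c' hc' hrow => ?_
    exact eq_of_not_laterInRow (mem_filter.mp hc).1 (mem_filter.mp hc').1 hrow
      (mem_filter.mp hc).2.2 (mem_filter.mp hc').2.2

theorem card_middleBlockCells_le (hE : FreeCardBound F E) (hS : FormationFree F S)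
    (hq : Monotone q) :
    (middleBlockCells q S).card
      ≤ E * (positions S).card + (derive q (middleBlockCells q S)).card := by
  have hCS : middleBlockCells q S ⊆ S := filter_subset _ _
  have hblock : ∀ i, ((middleBlockCells q S).filter (q ·.1 = i)).card
      ≤ E * (positions ((middleBlockCells q S).filter (q ·.1 = i))).card
        + 1 * (rows ((middleBlockCells q S).filter (q ·.1 = i))).card := fun i => by
    rw [one_mul]
    exact card_le_of_forall_not_hasFormation_two hE fun R hR =>
      not_hasFormation_two_of_earlierInRow_of_laterInRow hS hq ((filter_subset _ _).trans hCS)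
        (fun c hc => ⟨(mem_filter.mp hc).2, (mem_filter.mp (mem_filter.mp hc).1).2⟩) hR
  refine (card_le_of_card_block_le _ _ hblock).trans ?_
  rw [one_mul]
  gcongr
  exact image_subset_image hCS

/-- `hder` is applied to the cells in middle blocks of their rows, with every position replaced
by the index of its block. -/
theorem card_le_of_split (hE : FreeCardBound F E) (hS : FormationFree F S) {μ a b A B : ℕ}
    (hμ : 0 < μ) (hB : B + 4 ≤ b)
    (hloc : ∀ T ⊆ S, (positions T).card ≤ μ →
      T.card ≤ a * E * (positions T).card + b * (rows T).card)
    (hder : ∀ T, FormationFree F T → (∀ c ∈ T, c.1 * μ < (positions S).card) →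
      T.card ≤ A + B * (rows T).card) :
    S.card ≤ (a + 3) * E * (positions S).card + A + b * (rows S).card := by
  set q := blockOf (positions S) μ
  have hq : Monotone q := blockOf_mono
  have hlocal := card_localCells_le (q := q) (fun i => by
    rw [show positions (S.filter (q ·.1 = i)) = (positions S).filter (q · = i) by
      rw [filter_image]]
    exact card_filter_blockOf_eq_le hμ i) hloc
  have hderive : (derive q (middleBlockCells q S)).card
      ≤ A + B * (rows (nonlocalCells q S)).card := by
    refine (hder _ (fun R hR h => hS R hR ((h.of_derive hq).mono (filter_subset _ _)))
      fun e he => ?_).trans ?_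
    · obtain ⟨c, hc, rfl⟩ := mem_image.mp he
      exact blockOf_mul_lt (mem_image_of_mem _ (mem_filter.mp hc).1)
    · rw [rows_derive]
      gcongr
      exact image_subset_image (monotone_filter_right S fun _ _ h => Or.inl h.1)
  have hfirstG : rows (firstBlockCells q S) ⊆ rows (nonlocalCells q S) :=
    image_subset_image (monotone_filter_right S fun _ _ h => Or.inr h.2)
  have hlastG : rows (lastBlockCells q S) ⊆ rows (nonlocalCells q S) :=
    image_subset_image (monotone_filter_right S fun _ _ h => Or.inl h.1)
  have := Nat.mul_le_mul_left 2 (card_le_card hfirstG)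
  have := Nat.mul_le_mul_left 2 (card_le_card hlastG)
  have hfirst := card_firstBlockCells_le hE hS hq
  have hlast := card_lastBlockCells_le hE hS hq
  have hmiddle := card_middleBlockCells_le hE hS hq
  have := Nat.mul_le_mul_right (rows (nonlocalCells q S)).card hB
  have := Nat.mul_le_mul_left b
    (card_rows_localCells_add_card_rows_nonlocalCells_le (S := S) (q := q))
  rw [card_eq_card_localCells_add_card_add_card_add_card (q := q)]
  nlinarith

end Split

/-- A width `ackWidth (j + 1) (t + 1)` splits into `ackWidth j μ` blocks of width
`μ = ackWidth (j + 1) t`: the blocks are handled at step `t`, the contracted blocks at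
level `j`. -/
def ackWidth : ℕ → ℕ → ℕ
  | 0, _ => 2
  | _ + 1, 0 => 1
  | j + 1, t + 1 => ackWidth (j + 1) t * ackWidth j (ackWidth (j + 1) t)

theorem ackWidth_succ_succ (j t : ℕ) :
    ackWidth (j + 1) (t + 1) = ackWidth (j + 1) t * ackWidth j (ackWidth (j + 1) t) := by
  rw [ackWidth]

theorem ackWidth_pos : ∀ j t, 0 < ackWidth j t
  | 0, _ => by simp [ackWidth]
  | _ + 1, 0 => by simp [ackWidth]
  | j + 1, t + 1 => by
    rw [ackWidth_succ_succ]
    exact Nat.mul_pos (ackWidth_pos (j + 1) t) (ackWidth_pos j _)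

theorem ackWidth_le_succ (j t : ℕ) : ackWidth j t ≤ ackWidth j (t + 1) := by
  cases j with
  | zero => simp [ackWidth]
  | succ j =>
    rw [ackWidth_succ_succ]
    exact Nat.le_mul_of_pos_right _ (ackWidth_pos j _)

theorem ackWidth_mono (j : ℕ) : Monotone (ackWidth j) :=
  monotone_nat_of_le_succ (ackWidth_le_succ j)

theorem two_le_ackWidth : ∀ j t, 0 < t → 2 ≤ ackWidth j t
  | 0, _, _ => by simp [ackWidth]
  | j + 1, t + 1, _ => by
    rw [ackWidth_succ_succ]
    exact le_mul_of_one_le_of_le (ackWidth_pos (j + 1) t) (two_le_ackWidth j _ (ackWidth_pos _ _))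

theorem two_pow_le_ackWidth (j : ℕ) : ∀ t, 2 ^ t ≤ ackWidth (j + 1) t
  | 0 => by simp [ackWidth]
  | t + 1 => by
    rw [ackWidth_succ_succ, pow_succ]
    exact Nat.mul_le_mul (two_pow_le_ackWidth j t) (two_le_ackWidth j _ (ackWidth_pos _ _))

theorem ackWidth_succ_le (j : ℕ) {s : ℕ} (hs : 3 ≤ s) :
    ackWidth j (s + 1) ≤ ackWidth (j + 1) s := by
  obtain ⟨u, rfl⟩ : ∃ u, s = u + 1 := ⟨s - 1, by omega⟩
  have hu : u + 2 ≤ 2 ^ u := by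
    have := Nat.lt_two_pow_self (n := u - 1)
    rw [show u = u - 1 + 1 by omega, pow_succ]
    omega
  rw [ackWidth_succ_succ]
  calc ackWidth j (u + 1 + 1) ≤ ackWidth j (ackWidth (j + 1) u) :=
        ackWidth_mono j (hu.trans (two_pow_le_ackWidth j u))
    _ ≤ _ := Nat.le_mul_of_pos_left _ (ackWidth_pos _ _)

theorem ackWidth_le_ackWidth_add (k : ℕ) : ∀ j, ackWidth j (k + 3) ≤ ackWidth (j + k) 3 := by
  induction k with
  | zero => exact fun j => le_rfl
  | succ k ih =>
    intro j
    calc ackWidth j (k + 1 + 3) ≤ ackWidth (j + 1) (k + 3) := ackWidth_succ_le j (by omega)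
      _ ≤ ackWidth (j + (k + 1)) 3 := by rw [← add_assoc, add_right_comm]; exact ih (j + 1)

theorem ack_add_three_le_ackWidth : ∀ k t, ack k t + 3 ≤ ackWidth (k + 1) (t + 3)
  | 0, t => by
    rw [ack_zero]
    have := Nat.lt_two_pow_self (n := t + 3)
    have := two_pow_le_ackWidth 0 (t + 3)
    omega
  | k + 1, 0 => by
    rw [ack_succ_zero]
    exact (ack_add_three_le_ackWidth k 1).trans (ackWidth_succ_le (k + 1) le_rfl)
  | k + 1, t + 1 => by
    rw [ack_succ_succ, show t + 1 + 3 = t + 3 + 1 by rfl, ackWidth_succ_succ]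
    calc ack k (ack (k + 1) t) + 3 ≤ ackWidth (k + 1) (ack (k + 1) t + 3) :=
          ack_add_three_le_ackWidth k _
      _ ≤ ackWidth (k + 1) (ackWidth (k + 2) (t + 3)) :=
          ackWidth_mono _ (ack_add_three_le_ackWidth (k + 1) t)
      _ ≤ _ := Nat.le_mul_of_pos_left _ (ackWidth_pos _ _)

theorem alphA_spec (n : ℕ) : 1 ≤ alphA n ∧ n ≤ ack (alphA n) (alphA n) :=
  Nat.sInf_mem (s := {k | 1 ≤ k ∧ n ≤ ack k k})
    ⟨n + 1, by omega, (Nat.le_succ n).trans (lt_ack_right _ _).le⟩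

theorem le_ackWidth_alphA (n : ℕ) : n ≤ ackWidth (2 * alphA n + 1) 3 := by
  have h := ack_add_three_le_ackWidth (alphA n) (alphA n)
  have h' := ackWidth_le_ackWidth_add (alphA n) (alphA n + 1)
  rw [show alphA n + 1 + alphA n = 2 * alphA n + 1 by ring] at h'
  have := (alphA_spec n).2
  omega

section Core

variable {τ : Type*} [DecidableEq τ] {F : Finset τ → Prop} {E : ℕ}

theorem card_derived_le {j μ m : ℕ} {T : Finset (ℕ × τ)}
    (ih : ∀ T : Finset (ℕ × τ), FormationFree F T → (positions T).card ≤ ackWidth j μ →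
      T.card ≤ 6 * j * μ * E * (positions T).card + (4 * j + 2) * (rows T).card)
    (hT : FormationFree F T) (hμ : 0 < μ) (hm : m ≤ μ * ackWidth j μ)
    (hpos : ∀ c ∈ T, c.1 * μ < m) :
    T.card ≤ (6 * j + 3) * E * m + (4 * j + 2) * (rows T).card := by
  -- With few blocks the bound is trivial; with many, `2 j μ < m` pays for the last, short block.
  by_cases hfew : m ≤ 2 * j * μ
  · have hsub : positions T ⊆ range (2 * j) := fun x hx => by
      obtain ⟨c, hc, rfl⟩ := mem_image.mp hx
      exact mem_range.mpr (Nat.lt_of_mul_lt_mul_right ((hpos c hc).trans_le hfew))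
    calc T.card ≤ (positions T).card * (rows T).card := card_le_card_positions_mul_card_rows T
      _ ≤ (4 * j + 2) * (rows T).card := by
          gcongr
          exact (card_le_card hsub).trans (by simp; omega)
      _ ≤ _ := Nat.le_add_left _ _
  · set p := (m - 1) / μ + 1
    have hsub : positions T ⊆ range p := fun x hx => by
      obtain ⟨c, hc, rfl⟩ := mem_image.mp hx
      exact mem_range.mpr (Nat.lt_succ_of_le ((Nat.le_div_iff_mul_le hμ).mpr
        (Nat.le_sub_one_of_lt (hpos c hc))))
    have hcard : (positions T).card ≤ p := (card_le_card hsub).trans (card_range p).le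
    have hp : p ≤ ackWidth j μ :=
      Nat.succ_le_of_lt ((Nat.div_lt_iff_lt_mul hμ).mpr (by rw [mul_comm] at hm; omega))
    have hμp : μ * p ≤ m - 1 + μ := by
      rw [mul_add_one, mul_comm]
      exact Nat.add_le_add_right (Nat.div_mul_le_self _ _) μ
    calc T.card ≤ 6 * j * μ * E * (positions T).card + (4 * j + 2) * (rows T).card :=
          ih T hT (hcard.trans hp)
      _ ≤ 6 * j * E * (m + μ) + (4 * j + 2) * (rows T).card := by
          have := Nat.mul_le_mul_left μ hcard
          have : μ * (positions T).card ≤ m + μ := by omega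
          have h : 6 * j * μ * E * (positions T).card = 6 * j * E * (μ * (positions T).card) := by
            ring
          rw [h]
          gcongr
      _ ≤ _ := by
          have : 2 * (j * μ) ≤ m := by linarith
          have := Nat.mul_le_mul_left (3 * E) this
          nlinarith

theorem card_le_of_formationFree (hE : FreeCardBound F E) :
    ∀ j t (S : Finset (ℕ × τ)), FormationFree F S → (positions S).card ≤ ackWidth j t →
      S.card ≤ 6 * j * t * E * (positions S).card + (4 * j + 2) * (rows S).card
  | 0, t, S, _, hm => by
    have h2 : (positions S).card ≤ 2 := by simpa [ackWidth] using hm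
    calc S.card ≤ (positions S).card * (rows S).card := card_le_card_positions_mul_card_rows S
      _ ≤ 2 * (rows S).card := by gcongr
      _ = _ := by ring
  | j + 1, 0, S, _, hm => by
    have h1 : (positions S).card ≤ 1 := by simpa [ackWidth] using hm
    calc S.card ≤ (positions S).card * (rows S).card := card_le_card_positions_mul_card_rows S
      _ ≤ 1 * (rows S).card := by gcongr
      _ ≤ _ := by nlinarith
  | j + 1, t + 1, S, hS, hm => by
    by_cases hsmall : (positions S).card ≤ ackWidth (j + 1) t
    · refine (card_le_of_formationFree hE (j + 1) t S hS hsmall).trans ?_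
      gcongr
      omega
    have hμ := ackWidth_pos (j + 1) t
    refine (card_le_of_split hE hS hμ (a := 6 * (j + 1) * t) (B := 4 * j + 2) (by omega)
      (fun T hTS hT => card_le_of_formationFree hE (j + 1) t T (hS.mono hTS) hT)
      fun T hT hpos => card_derived_le (fun T hT hTm => card_le_of_formationFree hE j _ T hT hTm)
        hT hμ (ackWidth_succ_succ j t ▸ hm) hpos).trans (le_of_eq ?_)
    ring

end Core

section Matrices

variable {d : ℕ} {pdims : Fin d → ℕ} {n : ℕ}

def IsCopy (P : Finset ((i : Fin d) → Fin (pdims i))) (R : Finset (Fin d → Fin n)) : Prop :=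
  ∃ g : (i : Fin d) → (Fin (pdims i) → Fin n), (∀ i, StrictMono (g i)) ∧
    R = P.image fun x i => g i (x i)

theorem freeCardBound_exSq (P : Finset ((i : Fin d) → Fin (pdims i))) :
    FreeCardBound (IsCopy (n := n) P) (exSq n P) := by
  intro W hW
  refine le_csSup ⟨Fintype.card (Fin d → Fin n), ?_⟩ ⟨W, ?_, rfl⟩
  · rintro _ ⟨M, -, rfl⟩
    exact card_le_univ M
  · rintro ⟨f, hf, hmem⟩
    refine hW (P.image fun x i => f i (x i)) (fun r hr => ?_) ⟨f, hf, rfl⟩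
    obtain ⟨x, hx, rfl⟩ := mem_image.mp hr
    exact hmem x hx

theorem card_pow_le_mul_exSq (P : Finset ((i : Fin d) → Fin (pdims i))) (hP : 2 ≤ P.card) :
    n ^ d ≤ n * exSq n P := by
  obtain ⟨a, ha, b, hb, hab⟩ := one_lt_card.mp hP
  obtain ⟨i, hi⟩ := Function.ne_iff.mp hab
  have hfiber : ∀ z : Fin n,
      (univ.filter fun v : Fin d → Fin n => v i = z).card ≤ exSq n P := by
    refine fun z => freeCardBound_exSq P _ fun R hR ⟨g, hg, hRP⟩ => hi ((hg i).injective ?_)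
    have hcoord : ∀ x ∈ P, g i (x i) = z := by
      intro x hx
      have hxR : (fun j => g j (x j)) ∈ R := hRP ▸ mem_image_of_mem _ hx
      exact (mem_filter.mp (hR hxR)).2
    rw [hcoord a ha, hcoord b hb]
  calc n ^ d = (univ : Finset (Fin d → Fin n)).card := by simp
    _ = ∑ z : Fin n, (univ.filter fun v : Fin d → Fin n => v i = z).card :=
        card_eq_sum_card_fiberwise fun _ _ => mem_univ _
    _ ≤ ∑ _z : Fin n, exSq n P := sum_le_sum fun z _ => hfiber z
    _ = n * exSq n P := by simp

def toCell (v : Fin (d + 1) → Fin n) : ℕ × (Fin d → Fin n) := ((v 0 : ℕ), Fin.tail v)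

theorem toCell_injective : Function.Injective (toCell (d := d) (n := n)) := by
  intro v w h
  simp only [toCell, Prod.mk.injEq] at h
  rw [← Fin.cons_self_tail v, ← Fin.cons_self_tail w, Fin.val_injective h.1, h.2]

theorem formationFree_image_toCell (P : Finset ((i : Fin d) → Fin (pdims i)))
    {M : Finset (Fin (d + 1) → Fin n)} (hM : ¬ ContainsFormation P 4 M) :
    FormationFree (IsCopy P) (M.image toCell) := by
  rintro R ⟨g, hg, rfl⟩ ⟨x, hx, hlt⟩
  set G : Fin 4 → Finset (Fin (d + 1) → Fin n) := fun a =>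
    M.filter fun v =>
      Fin.tail v ∈ P.image (fun y i => g i (y i)) ∧ (v 0 : ℕ) = x a (Fin.tail v)
  have himage : ∀ a, (G a).image Fin.tail = P.image fun y i => g i (y i) := by
    intro a
    ext t
    refine ⟨fun ht => ?_, fun ht => ?_⟩
    · obtain ⟨v, hv, rfl⟩ := mem_image.mp ht
      exact (mem_filter.mp hv).2.1
    · obtain ⟨v, hv, hvt⟩ := mem_image.mp (hx a t ht)
      simp only [toCell, Prod.mk.injEq] at hvt
      exact mem_image.mpr ⟨v, mem_filter.mpr ⟨hv, hvt.2 ▸ ht, hvt.2 ▸ hvt.1⟩, hvt.2⟩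
  have hinj : ∀ a, Set.InjOn Fin.tail (G a : Set (Fin (d + 1) → Fin n)) := by
    intro a v hv w hw hvw
    refine toCell_injective (Prod.ext ?_ hvw)
    exact (mem_filter.mp hv).2.2.trans (hvw ▸ (mem_filter.mp hw).2.2.symm)
  refine hM ⟨G, ⟨fun a => ?_, ⟨g, hg, himage⟩, fun a b hab v hv w hw => ?_⟩,
    fun a => filter_subset _ _⟩
  · rw [← card_image_of_injOn (hinj a), himage a, card_image_of_injective]
    exact fun y y' h => funext fun i => (hg i).injective (congrFun h i)
  · obtain ⟨-, hvR, hv0⟩ := mem_filter.mp hv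
    obtain ⟨-, hwR, hw0⟩ := mem_filter.mp hw
    exact Fin.lt_def.mpr (hv0 ▸ hw0 ▸ hlt a b hab _ hvR _ hwR)

end Matrices

theorem stmt11_general {d : ℕ} {pdims : Fin d → ℕ}
    (P : Finset ((i : Fin d) → Fin (pdims i))) (hP : 2 ≤ P.card) :
    ∃ C : ℕ, 0 < C ∧ ∀ n : ℕ, 0 < n →
      exFormation n P 4 ≤ C * n * alphA n * exSq n P := by
  refine ⟨68, by norm_num, fun n _ => csSup_le' ?_⟩
  rintro _ ⟨M, hM, rfl⟩
  set α := alphA n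
  set E := exSq n P
  have hpos : (positions (M.image toCell)).card ≤ n :=
    (card_le_card (t := range n) fun x hx => by
      obtain ⟨c, hc, rfl⟩ := mem_image.mp hx
      obtain ⟨v, -, rfl⟩ := mem_image.mp hc
      exact mem_range.mpr (v 0).isLt).trans (card_range n).le
  have hrows : (rows (M.image toCell)).card ≤ n * E :=
    (card_le_univ _).trans (by simpa using card_pow_le_mul_exSq (n := n) P hP)
  have hbound := card_le_of_formationFree (freeCardBound_exSq P) _ _ _
    (formationFree_image_toCell P hM) (hpos.trans (le_ackWidth_alphA n))
  rw [card_image_of_injective _ toCell_injective] at hbound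
  have hα := (alphA_spec n).1
  calc M.card ≤ 6 * (2 * α + 1) * 3 * E * n + (4 * (2 * α + 1) + 2) * (n * E) := by
        refine hbound.trans ?_
        gcongr
    _ ≤ 68 * n * α * E := by nlinarith [Nat.zero_le (n * E)]

/-- `ex(n, F_{P,4}, d+1) ≤ C · n · α(n) · ex(n, P, d)`. -/
theorem stmt11 {d : ℕ} (hd : 0 < d) {pdims : Fin d → ℕ}
    (P : Finset ((i : Fin d) → Fin (pdims i))) (hP : 2 ≤ P.card) :
    ∃ C : ℕ, 0 < C ∧ ∀ n : ℕ, 0 < n →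
      exFormation n P 4 ≤ C * n * alphA n * exSq n P :=
  stmt11_general P hP
end
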